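/- arXiv:2604.06553 — 5 statements merged into one kernel-verified Lean document; each statement's English description precedes it below -/
import Mathlib

section
/- If K is a closed disc in the Euclidean plane with diameter [N,S], then K possesses the stereographic property with respect to N, S, and the tangent line L to K at S: for every chord [a,b] of K, reflecting a and b across the bisector of the angle at N formed by lines L(a,N) and L(b,N) yields points r(a), r(b) such that the segment [r(a),r(b)] is parallel to L. -/
open Set Metric EuclideanGeometry Filter RealInnerProductSpace Real

noncomputable section

abbrev E2 : Type := EuclideanSpace ℝ (Fin 2)
abbrev E3 : Type := EuclideanSpace ℝ (Fin 3)

/-- A convex body: a compact convex set with nonempty interior. -/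
def IsConvexBody {n : ℕ} (K : Set (EuclideanSpace ℝ (Fin n))) : Prop :=
  Convex ℝ K ∧ IsCompact K ∧ (interior K).Nonempty

/-- The line L(p,q) through two points. -/
def lineThru {n : ℕ} (p q : EuclideanSpace ℝ (Fin n)) : Set (EuclideanSpace ℝ (Fin n)) :=
  {x | ∃ t : ℝ, x = p + t • (q - p)}

/-- The line through p with direction v. -/
def lineDir {n : ℕ} (p v : EuclideanSpace ℝ (Fin n)) : Set (EuclideanSpace ℝ (Fin n)) :=
  {x | ∃ t : ℝ, x = p + t • v}

/-- The ray from N through a. -/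
def rayFrom {n : ℕ} (N a : EuclideanSpace ℝ (Fin n)) : Set (EuclideanSpace ℝ (Fin n)) :=
  {x | ∃ t : ℝ, 0 ≤ t ∧ x = N + t • (a - N)}

/-- The hyperplane through p with normal u (a line in ℝ², a plane in ℝ³). -/
def planeNormal {n : ℕ} (p u : EuclideanSpace ℝ (Fin n)) : Set (EuclideanSpace ℝ (Fin n)) :=
  {x | ⟪x - p, u⟫ = 0}

/-- Reflection across the line through p with direction v.  In ℝ³ this map is exactly the
rotation by angle π about that line. -/
def reflAxis {n : ℕ} (p v x : EuclideanSpace ℝ (Fin n)) : EuclideanSpace ℝ (Fin n) :=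
  p + ((2 * ⟪x - p, v⟫ / ⟪v, v⟫) • v - (x - p))

/-- Reflection across the hyperplane through p with normal m. -/
def reflPlane {n : ℕ} (p m x : EuclideanSpace ℝ (Fin n)) : EuclideanSpace ℝ (Fin n) :=
  x - ((2 * ⟪x - p, m⟫ / ⟪m, m⟫) • m)

/-- The cone S_x(W) generated by W with apex x. -/
def coneHull {n : ℕ} (x : EuclideanSpace ℝ (Fin n)) (W : Set (EuclideanSpace ℝ (Fin n))) :
    Set (EuclideanSpace ℝ (Fin n)) :=
  {z | ∃ y ∈ W, ∃ l : ℝ, 0 ≤ l ∧ z = x + l • (y - x)}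

/-- C_x(W), the boundary of the cone S_x(W). -/
def coneBd {n : ℕ} (x : EuclideanSpace ℝ (Fin n)) (W : Set (EuclideanSpace ℝ (Fin n))) :
    Set (EuclideanSpace ℝ (Fin n)) := frontier (coneHull x W)

/-- P is a support hyperplane of K at S. -/
def IsSupportPlaneAt {n : ℕ} (K : Set (EuclideanSpace ℝ (Fin n))) (S : EuclideanSpace ℝ (Fin n))
    (P : Set (EuclideanSpace ℝ (Fin n))) : Prop :=
  ∃ u, u ≠ 0 ∧ P = planeNormal S u ∧ ∀ y ∈ K, ⟪y - S, u⟫ ≤ 0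

/-- The stereographic property of a planar convex body K with respect to the point N and the
support line with normal u: for every chord [a,b], reflecting a, b across the bisector B of the
angle at N between L(N,a) and L(N,b) (i.e. the line through N whose reflection maps the ray
from N through a onto the ray from N through b) yields a segment parallel to the support line
(i.e. perpendicular to its normal u). -/
def StereoProp (K : Set E2) (N u : E2) : Prop :=
  ∀ a ∈ frontier K, ∀ b ∈ frontier K, a ≠ N → b ≠ N →
    ∀ w : E2, w ≠ 0 → reflAxis N w '' rayFrom N a = rayFrom N b →
      ⟪reflAxis N w a - reflAxis N w b, u⟫ = 0

/-- f is a rotation about the line L: an orientation preserving isometry of ℝ³ fixing L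
pointwise. -/
def IsRotationAbout (f : E3 → E3) (L : Set E3) : Prop :=
  ∃ (A : E3 ≃ₗᵢ[ℝ] E3) (b : E3), (∀ x, f x = A x + b) ∧
    LinearMap.det (A.toLinearEquiv : E3 →ₗ[ℝ] E3) = 1 ∧ ∀ x ∈ L, f x = x

/-- The hypotheses of the stereographic characterization theorem (Theorem 5 of the paper):
K is a convex body, N ≠ S are boundary points, Π_S = planeNormal S u is the unique support
plane at S, Ψ is the stereographic projection from N onto Π_S, and every section K_Γ = Γ ∩ K
(Γ meeting int K, N ∉ Γ, Γ not parallel to Π_S) gives a cone C_N(K_Γ) invariant under a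
rotation R^Γ by π about some line L_Γ, with Ψ(K_Γ) = R^Γ(K'_Γ) for a homothetic copy K'_Γ of
K_Γ centered at N. -/
def StereoHyp (K : Set E3) (N S u : E3) (Ψ : E3 → E3) : Prop :=
  IsConvexBody K ∧ N ∈ frontier K ∧ S ∈ frontier K ∧ N ≠ S ∧ u ≠ 0 ∧
  IsSupportPlaneAt K S (planeNormal S u) ∧
  (∀ P, IsSupportPlaneAt K S P → P = planeNormal S u) ∧
  (∀ x ∈ K, x ≠ N → Ψ x ∈ lineThru N x ∧ Ψ x ∈ planeNormal S u) ∧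
  (∀ p w : E3, w ≠ 0 → (planeNormal p w ∩ interior K).Nonempty → N ∉ planeNormal p w →
    ¬ (∃ s : ℝ, w = s • u) →
    ∃ q v : E3, v ≠ 0 ∧
      reflAxis q v '' coneBd N (planeNormal p w ∩ K) = coneBd N (planeNormal p w ∩ K) ∧
      ∃ lam : ℝ, 0 < lam ∧
        Ψ '' (planeNormal p w ∩ K) =
          reflAxis q v '' ((fun x => N + lam • (x - N)) '' (planeNormal p w ∩ K)))

/-- The circumscribed disc of K: the closed disc of minimal radius containing K. -/
def IsCircumDisc (K : Set E2) (c : E2) (r : ℝ) : Prop :=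
  K ⊆ closedBall c r ∧ ∀ c' : E2, ∀ r' : ℝ, K ⊆ closedBall c' r' → r ≤ r'

/-- An ellipse in ℝ³: the image of the unit circle under an injective affine map. -/
def IsEllipse3 (s : Set E3) : Prop :=
  ∃ T : E2 →ᵃ[ℝ] E3, Function.Injective T ∧ s = T '' (sphere (0 : E2) 1)
section Aux

lemma reflAxis_sub (N w x : E2) :
    reflAxis N w x - N = (2 * ⟪x - N, w⟫ / ⟪w, w⟫) • w - (x - N) := by
  simp [reflAxis]

lemma refl_vec_inner (w y : E2) (hq : ⟪w, w⟫ ≠ (0:ℝ)) :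
    ⟪(2 * ⟪y, w⟫ / ⟪w, w⟫) • w - y, w⟫ = ⟪y, w⟫ := by
  rw [inner_sub_left, real_inner_smul_left]
  generalize ⟪y, w⟫ = p
  generalize hq' : ⟪w, w⟫ = q at hq ⊢
  field_simp
  ring

lemma refl_vec_self (w y : E2) (hq : ⟪w, w⟫ ≠ (0:ℝ)) :
    ⟪(2 * ⟪y, w⟫ / ⟪w, w⟫) • w - y, (2 * ⟪y, w⟫ / ⟪w, w⟫) • w - y⟫ = ⟪y, y⟫ := by
  simp only [inner_sub_left, inner_sub_right, real_inner_smul_left, real_inner_smul_right]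
  rw [real_inner_comm w y]
  generalize ⟪y, w⟫ = p
  generalize hq' : ⟪w, w⟫ = q at hq ⊢
  field_simp
  ring

lemma reflAxis_norm_sub (N w x : E2) (hw : w ≠ 0) :
    ‖reflAxis N w x - N‖ = ‖x - N‖ := by
  have hq : ⟪w, w⟫ ≠ (0:ℝ) := inner_self_ne_zero.mpr hw
  have h : ⟪reflAxis N w x - N, reflAxis N w x - N⟫ = ⟪x - N, x - N⟫ := by
    rw [reflAxis_sub]; exact refl_vec_self w (x - N) hq
  have h1 := real_inner_self_eq_norm_sq (reflAxis N w x - N)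
  have h2 := real_inner_self_eq_norm_sq (x - N)
  nlinarith [norm_nonneg (reflAxis N w x - N), norm_nonneg (x - N)]

lemma reflAxis_invol (N w x : E2) (hw : w ≠ 0) :
    reflAxis N w (reflAxis N w x) = x := by
  have hq : ⟪w, w⟫ ≠ (0:ℝ) := inner_self_ne_zero.mpr hw
  have key : reflAxis N w (reflAxis N w x) - N = x - N := by
    rw [reflAxis_sub, reflAxis_sub, refl_vec_inner w (x - N) hq]
    abel
  have := congrArg (· + N) key
  simpa using this

end Aux

/-- The closed disc with diameter [N,S] has the stereographic property with
respect to N, S and the tangent (support) line to the disc at S. -/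
theorem stmt0 (N S : E2) (hNS : N ≠ S) (u : E2) (hu : u ≠ 0)
    (htangent : IsSupportPlaneAt (closedBall (midpoint ℝ N S) (dist N S / 2)) S
      (planeNormal S u)) :
    StereoProp (closedBall (midpoint ℝ N S) (dist N S / 2)) N u := by
  intro a ha b hb haN hbN w hw hrefl
  obtain ⟨u', hu'0, heq, hsupp⟩ := htangent
  set c : E2 := midpoint ℝ N S with hc
  set r : ℝ := dist N S / 2 with hrdef
  have hr0 : 0 < r := by
    have : 0 < dist N S := dist_pos.mpr hNS
    rw [hrdef]; linarith
  set e : E2 := S - c with he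
  have hcN : c - N = e := by
    rw [he, hc, midpoint_eq_smul_add, show (⅟2:ℝ) = 2⁻¹ by norm_num]
    module
  have hce : ‖e‖ = r := by
    have h1 : e = (2:ℝ)⁻¹ • (S - N) := by rw [he, hc, midpoint_eq_smul_add, show (⅟2:ℝ) = 2⁻¹ by norm_num]; module
    rw [h1, norm_smul, hrdef, dist_eq_norm, norm_sub_rev]
    simp
    ring
  have hnu' : ‖u'‖ ≠ 0 := norm_ne_zero_iff.mpr hu'0
  -- support condition gives ⟪e, u'⟫ ≥ r‖u'‖
  have hpos : 0 < ‖u'‖ := norm_pos_iff.mpr hu'0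
  have hy : c + (r / ‖u'‖) • u' ∈ closedBall c r := by
    have hd : dist (c + (r / ‖u'‖) • u') c = r := by
      rw [dist_eq_norm, add_sub_cancel_left, norm_smul, Real.norm_eq_abs,
        abs_of_nonneg (div_nonneg hr0.le hpos.le)]
      field_simp
    exact mem_closedBall.mpr hd.le
  have hsup1 := hsupp _ hy
  have hinner_e_u' : r * ‖u'‖ ≤ ⟪e, u'⟫ := by
    have hsub : c + (r / ‖u'‖) • u' - S = (r / ‖u'‖) • u' - e := by rw [he]; module
    rw [hsub, inner_sub_left, real_inner_smul_left, real_inner_self_eq_norm_sq] at hsup1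
    have hx : r / ‖u'‖ * ‖u'‖ ^ 2 = r * ‖u'‖ := by field_simp
    linarith
  -- u' is a positive multiple of e
  have hu'e : u' = (‖u'‖ / r) • e := by
    have hk : (0:ℝ) ≤ ‖u'‖ / r := div_nonneg (norm_nonneg u') hr0.le
    have hdiv : (‖u'‖ / r) * r = ‖u'‖ := by field_simp
    have hd : ⟪u' - (‖u'‖ / r) • e, u' - (‖u'‖ / r) • e⟫ ≤ (0:ℝ) := by
      have hsm : ‖(‖u'‖ / r) • e‖ = ‖u'‖ := by
        rw [norm_smul, Real.norm_eq_abs, abs_of_nonneg hk, hce]; exact hdiv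
      simp only [inner_sub_left, inner_sub_right, real_inner_smul_left, real_inner_smul_right,
        real_inner_self_eq_norm_sq]
      rw [real_inner_comm e u', hsm]
      nlinarith [hinner_e_u', hk, hdiv]
    have hd0 : u' - (‖u'‖ / r) • e = 0 := by
      have := le_antisymm hd (real_inner_self_nonneg)
      exact inner_self_eq_zero.mp this
    exact sub_eq_zero.mp hd0
  -- u is a multiple of u'
  have hq' : ⟪u', u'⟫ ≠ (0:ℝ) := inner_self_ne_zero.mpr hu'0
  set κ : ℝ := ⟪u, u'⟫ / ⟪u', u'⟫ with hκ
  have hdu' : ⟪u - κ • u', u'⟫ = 0 := by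
    rw [inner_sub_left, real_inner_smul_left, hκ, div_mul_cancel₀ _ hq']
    ring
  have hmem : S + (u - κ • u') ∈ planeNormal S u' := by
    simpa [planeNormal] using hdu'
  have hmem2 : S + (u - κ • u') ∈ planeNormal S u := by rw [heq]; exact hmem
  have hdu : ⟪u - κ • u', u⟫ = 0 := by simpa [planeNormal] using hmem2
  have hu_eq : u = κ • u' := by
    have h0 : ⟪u - κ • u', u - κ • u'⟫ = (0:ℝ) := by
      rw [inner_sub_right, real_inner_smul_right, hdu, hdu']
      ring
    exact sub_eq_zero.mp (inner_self_eq_zero.mp h0)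
  -- boundary points are on the sphere
  rw [show frontier (closedBall c r) = sphere c r from frontier_closedBall c (ne_of_gt hr0)] at ha hb
  -- Thales
  have thales : ∀ x : E2, x ∈ sphere c r → 2 * ⟪x - N, e⟫ = ‖x - N‖ ^ 2 := by
    intro x hx
    have hxc : ‖x - c‖ = r := by simpa [dist_eq_norm] using hx
    have hxN : x - N = (x - c) + e := by rw [← hcN]; abel
    have h1 : ⟪x - c, x - c⟫ = r ^ 2 := by rw [real_inner_self_eq_norm_sq, hxc]
    have h2 : ⟪e, e⟫ = r ^ 2 := by rw [real_inner_self_eq_norm_sq, hce]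
    have h3 : ‖(x - c) + e‖ ^ 2 = ⟪x - c, x - c⟫ + 2 * ⟪x - c, e⟫ + ⟪e, e⟫ :=
      (real_inner_add_add_self (x - c) e) ▸ (real_inner_self_eq_norm_sq _).symm
    rw [hxN, inner_add_left, h3, h1, h2]
    ring
  -- ray facts
  have hfa : reflAxis N w a ∈ rayFrom N b := by
    rw [← hrefl]
    exact ⟨a, ⟨1, zero_le_one, by simp⟩, rfl⟩
  obtain ⟨t, ht0, hta⟩ := hfa
  have hfb : reflAxis N w b ∈ rayFrom N a := by
    have hbmem : b ∈ rayFrom N b := ⟨1, zero_le_one, by simp⟩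
    rw [← hrefl] at hbmem
    obtain ⟨x, hx, hxb⟩ := hbmem
    rw [← hxb, reflAxis_invol N w x hw]
    exact hx
  obtain ⟨s, hs0, hsb⟩ := hfb
  -- norm relations
  have h1 : t * ‖b - N‖ = ‖a - N‖ := by
    have hna := reflAxis_norm_sub N w a hw
    rw [hta] at hna
    simpa [norm_smul, abs_of_nonneg ht0] using hna
  have h2 : s * ‖a - N‖ = ‖b - N‖ := by
    have hnb := reflAxis_norm_sub N w b hw
    rw [hsb] at hnb
    simpa [norm_smul, abs_of_nonneg hs0] using hnb
  have hdiff : reflAxis N w a - reflAxis N w b = t • (b - N) - s • (a - N) := by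
    rw [hta, hsb]; abel
  have key : ⟪t • (b - N) - s • (a - N), e⟫ = (0:ℝ) := by
    have ta := thales a ha
    have tb := thales b hb
    have e1 : t * ‖b - N‖ ^ 2 = ‖a - N‖ * ‖b - N‖ := by rw [← h1]; ring
    have e2 : s * ‖a - N‖ ^ 2 = ‖b - N‖ * ‖a - N‖ := by rw [← h2]; ring
    rw [inner_sub_left, real_inner_smul_left, real_inner_smul_left]
    linear_combination (t / 2) * tb - (s / 2) * ta + (1 / 2) * e1 - (1 / 2) * e2
  rw [hdiff, hu_eq, hu'e, real_inner_smul_right, real_inner_smul_right, key]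
  ring
end
end

section
/- Let K ⊂ ℝ² be a convex body possessing the stereographic property with respect to points N, S ∈ bd K and the unique support line L of K at S. Then K is a closed disc with diameter [N,S]. -/
open Set Metric EuclideanGeometry Filter RealInnerProductSpace Real

noncomputable section

/-!
Reflecting `a` and `b` in the bisector at `N` sends `a` to the point of the ray `N b` at distance
`‖a - N‖` from `N` and `b` to the point of the ray `N a` at distance `‖b - N‖`, so the stereographic
property says `‖a - N‖² ⟪b - N, u⟫ = ‖b - N‖² ⟪a - N, u⟫` for boundary points `a, b`. Comparing
with `S`, every boundary point satisfies `⟪b - N, u⟫ = c ‖b - N‖²`, the circle through `N` with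
centre `N + u / (2c)`; `c ≠ 0` because the boundary of a bounded set with interior does not lie on
a line. A compact set with interior whose frontier lies on a circle is the closed disc, and the
only point of that disc with outer normal `u` is the antipode of `N`.
-/

theorem IsPreconnected.inter_frontier_nonempty {X : Type*} [TopologicalSpace X] {s t : Set X}
    (hs : IsPreconnected s) (hst : (s ∩ t).Nonempty) (hsnt : (s \ t).Nonempty) :
    (s ∩ frontier t).Nonempty := by
  by_contra hfr
  have hcover : s ⊆ interior t ∪ (closure t)ᶜ := by
    intro z hz
    by_cases hzc : z ∈ closure t
    · exact Or.inl (by_contra fun hzi => hfr ⟨z, hz, hzc, hzi⟩)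
    · exact Or.inr hzc
  have hdisj : Disjoint (interior t) (closure t)ᶜ :=
    disjoint_compl_right_iff_subset.mpr interior_subset_closure
  obtain ⟨x, hxs, hxt⟩ := hst
  obtain ⟨y, hys, hyt⟩ := hsnt
  rcases hs.subset_or_subset isOpen_interior isClosed_closure.isOpen_compl hdisj hcover with h | h
  · exact hyt (interior_subset (h hys))
  · exact h hxs (subset_closure hxt)

section NormedSpace

variable {E : Type*} [NormedAddCommGroup E] [NormedSpace ℝ E]

theorem exists_add_smul_mem_frontier {K : Set E} (hK : Bornology.IsBounded K) {x : E}
    (hx : x ∈ K) {v : E} (hv : v ≠ 0) : ∃ t : ℝ, 0 ≤ t ∧ x + t • v ∈ frontier K := by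
  obtain ⟨R, hR⟩ := isBounded_iff_forall_norm_le.mp hK
  set M := (R + ‖x‖ + 1) / ‖v‖
  have hvpos : 0 < ‖v‖ := norm_pos_iff.mpr hv
  have hM : 0 ≤ M := div_nonneg (by linarith [norm_nonneg x, hR x hx]) hvpos.le
  have hfar : x + M • v ∉ K := fun hmem => by
    have hMv : ‖M • v‖ = R + ‖x‖ + 1 := by
      rw [norm_smul, Real.norm_of_nonneg hM, div_mul_cancel₀ _ hvpos.ne']
    have := norm_sub_le (x + M • v) x
    rw [add_sub_cancel_left, hMv] at this
    linarith [hR _ hmem]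
  obtain ⟨z, hzseg, hzK⟩ := (convex_segment x (x + M • v)).isPreconnected.inter_frontier_nonempty
    ⟨x, left_mem_segment ℝ _ _, hx⟩ ⟨_, right_mem_segment ℝ _ _, hfar⟩
  rw [segment_eq_image'] at hzseg
  obtain ⟨θ, hθ, rfl⟩ := hzseg
  refine ⟨θ * M, mul_nonneg hθ.1 hM, ?_⟩
  simpa only [add_sub_cancel_left, smul_smul] using hzK

theorem eq_closedBall_of_frontier_subset_sphere {K : Set E} (hK : IsCompact K)
    (hint : (interior K).Nonempty) {O : E} {r : ℝ} (hr : 0 < r)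
    (hfr : frontier K ⊆ sphere O r) : K = closedBall O r := by
  have hsub : K ⊆ closedBall O r := fun x hx => by
    by_contra hxO
    rw [mem_closedBall, not_le, dist_eq_norm] at hxO
    have hxO' : x - O ≠ 0 := norm_pos_iff.mp (hr.trans hxO)
    obtain ⟨t, ht, hz⟩ := exists_add_smul_mem_frontier hK.isBounded hx hxO'
    have hzO := hfr hz
    rw [Metric.mem_sphere, dist_eq_norm,
      show x + t • (x - O) - O = (1 + t) • (x - O) by rw [add_smul, one_smul]; abel,
      norm_smul, Real.norm_of_nonneg (by linarith)] at hzO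
    nlinarith [norm_nonneg (x - O)]
  have hball : ball O r ⊆ K := fun x hx => by
    by_contra hxK
    obtain ⟨x₀, hx₀⟩ := hint
    have hx₀O : x₀ ∈ ball O r := by
      simpa only [interior_closedBall O hr.ne'] using interior_mono hsub hx₀
    obtain ⟨z, hzseg, hzK⟩ := (convex_segment x₀ x).isPreconnected.inter_frontier_nonempty
      ⟨x₀, left_mem_segment ℝ _ _, interior_subset hx₀⟩ ⟨x, right_mem_segment ℝ _ _, hxK⟩
    have hzO : z ∈ ball O r := (convex_ball O r).segment_subset hx₀O hx hzseg
    exact (Metric.mem_sphere.mp (hfr hzK)).not_lt (mem_ball.mp hzO)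
  refine hsub.antisymm ?_
  rw [← closure_ball O hr.ne']
  exact closure_minimal hball hK.isClosed

end NormedSpace

section InnerProductSpace

variable {F : Type*} [NormedAddCommGroup F] [InnerProductSpace ℝ F]

theorem exists_ne_zero_inner_eq_zero [FiniteDimensional ℝ F] (h : 1 < Module.finrank ℝ F)
    (x : F) : ∃ w : F, w ≠ 0 ∧ ⟪x, w⟫ = 0 := by
  have hne : (ℝ ∙ x)ᗮ ≠ ⊥ := by
    rw [Ne, Submodule.orthogonal_eq_bot_iff]
    intro htop
    have := finrank_span_le_card (R := ℝ) ({x} : Set F)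
    rw [htop, finrank_top] at this
    simp only [toFinset_singleton, Finset.card_singleton] at this
    omega
  obtain ⟨w, hw, hw0⟩ := Submodule.exists_mem_ne_zero_of_ne_bot hne
  exact ⟨w, hw0, Submodule.mem_orthogonal_singleton_iff_inner_right.mp hw⟩

theorem exists_mem_frontier_inner_sub_ne {K : Set F} (hK : Bornology.IsBounded K) {x : F}
    (hx : x ∈ interior K) {v : F} (hv : v ≠ 0) (p : F) : ∃ z ∈ frontier K, ⟪z - p, v⟫ ≠ 0 := by
  by_contra! h
  obtain ⟨t, ht, hz⟩ := exists_add_smul_mem_frontier hK (interior_subset hx) hv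
  obtain ⟨t', ht', hz'⟩ := exists_add_smul_mem_frontier hK (interior_subset hx) (neg_ne_zero.mpr hv)
  have hdiff : (t + t') * ⟪v, v⟫ = 0 := by
    have := congrArg₂ (· - ·) (h _ hz) (h _ hz')
    simp only [sub_zero, ← inner_sub_left] at this
    rw [← this, show x + t • v - p - (x + t' • -v - p) = (t + t') • v by
      rw [smul_neg, add_smul]; abel, real_inner_smul_left]
  have hvv : 0 < ⟪v, v⟫ := real_inner_self_pos.mpr hv
  have ht0 : t = 0 := by nlinarith
  rw [ht0, zero_smul, add_zero] at hz
  exact hz.2 hx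

theorem mem_sphere_of_inner_eq_mul_norm_sq {N u b : F} {c : ℝ} (hc : c ≠ 0)
    (h : ⟪b - N, u⟫ = c * ‖b - N‖ ^ 2) :
    b ∈ sphere (N + (2 * c)⁻¹ • u) ‖(2 * c)⁻¹ • u‖ := by
  rw [Metric.mem_sphere, dist_eq_norm, ← sq_eq_sq₀ (norm_nonneg _) (norm_nonneg _),
    show b - (N + (2 * c)⁻¹ • u) = (b - N) - (2 * c)⁻¹ • u by abel, norm_sub_sq_real,
    real_inner_smul_right, h]
  field_simp
  ring

theorem norm_smul_sub_center_eq_of_forall_inner_sub_nonpos {O S u : F} {r : ℝ} (hr : 0 ≤ r)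
    (hS : S ∈ sphere O r) (h : ∀ y ∈ closedBall O r, ⟪y - S, u⟫ ≤ 0) :
    ‖u‖ • (S - O) = r • u := by
  rcases eq_or_ne u 0 with rfl | hu
  · simp
  have hu' : 0 < ‖u‖ := norm_pos_iff.mpr hu
  have hy : O + (r / ‖u‖) • u ∈ closedBall O r := by
    rw [mem_closedBall, dist_eq_norm, add_sub_cancel_left, norm_smul,
      Real.norm_of_nonneg (div_nonneg hr hu'.le), div_mul_cancel₀ _ hu'.ne']
  have hle := h _ hy
  rw [show O + (r / ‖u‖) • u - S = (r / ‖u‖) • u - (S - O) by abel, inner_sub_left,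
    real_inner_smul_left, real_inner_self_eq_norm_sq] at hle
  have hSO : ‖S - O‖ = r := by rw [← dist_eq_norm]; exact hS
  have hcs : ⟪S - O, u⟫ = ‖S - O‖ * ‖u‖ := by
    refine le_antisymm (real_inner_le_norm _ _) ?_
    rw [hSO]
    have : r / ‖u‖ * ‖u‖ ^ 2 = r * ‖u‖ := by field_simp
    linarith
  rw [inner_eq_norm_mul_iff_real, hSO] at hcs
  exact hcs

end InnerProductSpace

theorem exists_eq_smul_of_planeNormal_eq {n : ℕ} {p u v : EuclideanSpace ℝ (Fin n)}
    (h : planeNormal p u = planeNormal p v) : ∃ s : ℝ, v = s • u := by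
  have hperp : (ℝ ∙ u)ᗮ = (ℝ ∙ v)ᗮ := by
    ext x
    have hx := congrArg (p + x ∈ ·) h
    simp only [Submodule.mem_orthogonal_singleton_iff_inner_left]
    simpa [planeNormal] using hx
  have hv : v ∈ ℝ ∙ u := by
    rw [← Submodule.orthogonal_orthogonal (ℝ ∙ u), hperp, Submodule.orthogonal_orthogonal]
    exact Submodule.mem_span_singleton_self v
  obtain ⟨s, hs⟩ := Submodule.mem_span_singleton.mp hv
  exact ⟨s, hs.symm⟩

theorem reflAxis_add_smul {n : ℕ} (N w v : EuclideanSpace ℝ (Fin n)) (t : ℝ) :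
    reflAxis N w (N + t • v) = N + t • reflAxis 0 w v := by
  simp only [reflAxis, add_sub_cancel_left, sub_zero, zero_add, real_inner_smul_left, smul_sub,
    smul_smul]
  congr 3
  ring

-- The axis is `x + y`, or any line orthogonal to `x` when `y = -x`.
theorem exists_reflAxis_swap {n : ℕ} (hn : 1 < n) (x y : EuclideanSpace ℝ (Fin n))
    (hxy : ‖x‖ = ‖y‖) : ∃ w, w ≠ 0 ∧ reflAxis 0 w x = y ∧ reflAxis 0 w y = x := by
  by_cases hsum : x + y = 0
  · obtain ⟨w, hw, hxw⟩ := exists_ne_zero_inner_eq_zero (by rwa [finrank_euclideanSpace_fin]) x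
    obtain rfl : y = -x := eq_neg_of_add_eq_zero_right hsum
    refine ⟨w, hw, ?_, ?_⟩ <;> simp [reflAxis, hxw]
  · have hxw : 2 * ⟪x, x + y⟫ = ⟪x + y, x + y⟫ := by
      rw [inner_add_left, inner_add_right, inner_add_right, real_inner_self_eq_norm_sq,
        real_inner_self_eq_norm_sq, hxy, real_inner_comm]
      ring
    have hyw : 2 * ⟪y, x + y⟫ = ⟪x + y, x + y⟫ := by
      rw [inner_add_left, inner_add_right, inner_add_right, real_inner_self_eq_norm_sq,
        real_inner_self_eq_norm_sq, hxy, real_inner_comm]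
      ring
    have hww : ⟪x + y, x + y⟫ ≠ 0 := inner_self_ne_zero.mpr hsum
    refine ⟨x + y, hsum, ?_, ?_⟩ <;>
      simp only [reflAxis, sub_zero, zero_add, hxw, hyw, div_self hww, one_smul] <;> abel

namespace StereoProp

variable {K : Set E2} {N u : E2}

theorem smul (hst : StereoProp K N u) (s : ℝ) : StereoProp K N (s • u) :=
  fun a ha b hb haN hbN w hw hray => by
    rw [real_inner_smul_right, hst a ha b hb haN hbN w hw hray, mul_zero]

theorem norm_sq_mul_inner_eq (hst : StereoProp K N u) {a b : E2} (ha : a ∈ frontier K)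
    (hb : b ∈ frontier K) (haN : a ≠ N) (hbN : b ≠ N) :
    ‖a - N‖ ^ 2 * ⟪b - N, u⟫ = ‖b - N‖ ^ 2 * ⟪a - N, u⟫ := by
  set p := a - N
  set q := b - N
  have hα : 0 < ‖p‖ := norm_pos_iff.mpr (sub_ne_zero.mpr haN)
  have hβ : 0 < ‖q‖ := norm_pos_iff.mpr (sub_ne_zero.mpr hbN)
  obtain ⟨w, hw, hpq, hqp⟩ := exists_reflAxis_swap one_lt_two p ((‖p‖ / ‖q‖) • q) (by
    rw [norm_smul, Real.norm_of_nonneg (by positivity), div_mul_cancel₀ _ hβ.ne'])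
  have hrefl (t : ℝ) : reflAxis N w (N + t • p) = N + (t * (‖p‖ / ‖q‖)) • q := by
    rw [reflAxis_add_smul, hpq, smul_smul]
  have hrefl' (t : ℝ) : reflAxis N w (N + (t * (‖p‖ / ‖q‖)) • q) = N + t • p := by
    rw [← smul_smul, reflAxis_add_smul, hqp]
  have hk : ‖q‖ / ‖p‖ * (‖p‖ / ‖q‖) = 1 := by field_simp
  have hray : reflAxis N w '' rayFrom N a = rayFrom N b := by
    ext x
    constructor
    · rintro ⟨y, ⟨t, ht, rfl⟩, rfl⟩
      exact ⟨t * (‖p‖ / ‖q‖), by positivity, hrefl t⟩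
    · rintro ⟨t, ht, rfl⟩
      refine ⟨N + (t * (‖q‖ / ‖p‖)) • p, ⟨_, by positivity, rfl⟩, ?_⟩
      rw [hrefl, mul_assoc, hk, mul_one]
  have heq := hst a ha b hb haN hbN w hw hray
  have hb' : b = N + (‖q‖ / ‖p‖ * (‖p‖ / ‖q‖)) • q := by
    rw [hk, one_smul, add_sub_cancel]
  rw [show a = N + (1 : ℝ) • p by rw [one_smul, add_sub_cancel], hb', hrefl, hrefl',
    add_sub_add_left_eq_sub, inner_sub_left, real_inner_smul_left, real_inner_smul_left] at heq
  field_simp at heq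
  linear_combination heq

theorem exists_inner_eq_mul_norm_sq (hst : StereoProp K N u) {S : E2} (hS : S ∈ frontier K)
    (hSN : S ≠ N) : ∃ c : ℝ, ∀ b ∈ frontier K, ⟪b - N, u⟫ = c * ‖b - N‖ ^ 2 := by
  have hSN' : ‖S - N‖ ^ 2 ≠ 0 := pow_ne_zero _ (norm_ne_zero_iff.mpr (sub_ne_zero.mpr hSN))
  refine ⟨⟪S - N, u⟫ / ‖S - N‖ ^ 2, fun b hb => ?_⟩
  rcases eq_or_ne b N with rfl | hbN
  · simp
  rw [div_mul_eq_mul_div, eq_div_iff hSN']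
  linear_combination hst.norm_sq_mul_inner_eq hS hb hSN hbN

end StereoProp

theorem stmt1_general (K : Set E2) (hK : IsConvexBody K) (N S : E2)
    (hN : N ∈ frontier K) (hS : S ∈ frontier K) (hNS : N ≠ S)
    (u : E2) (hsupp : IsSupportPlaneAt K S (planeNormal S u))
    (hst : StereoProp K N u) :
    K = closedBall (midpoint ℝ N S) (dist N S / 2) := by
  obtain ⟨-, hcomp, hint⟩ := hK
  obtain ⟨u₀, hu₀, hplane, hsupp⟩ := hsupp
  obtain ⟨s, hs⟩ := exists_eq_smul_of_planeNormal_eq hplane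
  obtain ⟨c, hc⟩ := (hs ▸ hst.smul s).exists_inner_eq_mul_norm_sq hS hNS.symm
  have hc0 : c ≠ 0 := by
    rintro rfl
    obtain ⟨x, hx⟩ := hint
    obtain ⟨z, hz, hzN⟩ := exists_mem_frontier_inner_sub_ne hcomp.isBounded hx hu₀ N
    exact hzN (by rw [hc z hz, zero_mul])
  have hcpos : 0 < c := by
    have := hsupp N (hcomp.isClosed.frontier_subset hN)
    rw [← neg_sub, inner_neg_left, hc S hS, neg_nonpos] at this
    exact (nonneg_of_mul_nonneg_left this
      (pow_pos (norm_pos_iff.mpr (sub_ne_zero.mpr hNS.symm)) 2)).lt_of_ne' hc0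
  set v := (2 * c)⁻¹ • u₀
  have hv : ‖v‖ = (2 * c)⁻¹ * ‖u₀‖ := by rw [norm_smul, Real.norm_of_nonneg (by positivity)]
  have hfr : frontier K ⊆ sphere (N + v) ‖v‖ := fun b hb =>
    mem_sphere_of_inner_eq_mul_norm_sq hc0 (hc b hb)
  have hKeq := eq_closedBall_of_frontier_subset_sphere hcomp hint
    (norm_pos_iff.mpr (smul_ne_zero (by positivity) hu₀)) hfr
  have hSO := norm_smul_sub_center_eq_of_forall_inner_sub_nonpos (norm_nonneg _) (hfr hS)
    (hKeq ▸ hsupp)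
  rw [hv, mul_comm, mul_smul] at hSO
  have hSv : S - (N + v) = v := smul_right_injective _ (norm_ne_zero_iff.mpr hu₀) hSO
  have hmid : midpoint ℝ N S = N + v := by
    rw [midpoint_eq_iff, AffineEquiv.pointReflection_apply, vsub_eq_sub, vadd_eq_add,
      add_sub_cancel_left, sub_eq_iff_eq_add.mp hSv]
  have hdist : dist N S / 2 = ‖v‖ := by
    have := dist_left_midpoint (𝕜 := ℝ) N S
    rw [hmid, hfr hN, Real.norm_two] at this
    linarith
  rw [hmid, hdist, hKeq]

/-- A planar convex body with the stereographic property with respect to N, S and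
the unique support line at S is the closed disc with diameter [N,S]. -/
theorem stmt1 (K : Set E2) (hK : IsConvexBody K) (N S : E2)
    (hN : N ∈ frontier K) (hS : S ∈ frontier K) (hNS : N ≠ S)
    (u : E2) (hu : u ≠ 0) (hsupp : IsSupportPlaneAt K S (planeNormal S u))
    (huniq : ∀ P, IsSupportPlaneAt K S P → P = planeNormal S u)
    (hst : StereoProp K N u) :
    K = closedBall (midpoint ℝ N S) (dist N S / 2) :=
  stmt1_general K hK N S hN hS hNS u hsupp hst
end
end

section
/- Let E ⊂ ℝ³ be a solid ellipsoid of revolution with axis L(N,S), where N, S ∈ bd E. Then every inscribed cone of E with apex N is axially symmetric: for every plane Γ with Γ ∩ int E ≠ ∅ and N ∉ Γ, there exists a rotation R by angle π about some line through N with R(C_N(Γ ∩ E)) = C_N(Γ ∩ E). -/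
open Set Metric EuclideanGeometry Filter RealInnerProductSpace Real

noncomputable section

/-- A solid ellipsoid of revolution with center c, axis direction w (a unit vector), semi-axis a
along w and semi-axis b in the perpendicular directions. -/
def solidEllipsoidRev (c w : E3) (a b : ℝ) : Set E3 :=
  {x | (⟪x - c, w⟫) ^ 2 / a ^ 2 + ‖(x - c) - ⟪x - c, w⟫ • w‖ ^ 2 / b ^ 2 ≤ 1}


/-!
Seen from the apex `N`, the plane `Γ` becomes `{d | ⟪d, n⟫ = 1}` for a suitable `n`, and
homogenizing the ellipsoid's inequality along `Γ` shows that `S_N(Γ ∩ E) - N` is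
`{e | ⟪M e, e⟫ ≤ 0 ∧ 0 ≤ ⟪e, n⟫}` for a symmetric operator `M`. The double cone `⟪M e, e⟫ ≤ 0`
meets `n^⊥` only in `0`, and its open nappe is convex, hence connected. A reflection in the line
spanned by an eigenvector of `M` preserves the quadratic form, so it either maps the nappe to
itself or to its negative. For an orthonormal eigenbasis the reflections in the first two axes
compose to the reflection in the third, so they cannot all swap the nappes.
-/

section Reflection

variable {V : Type*} [NormedAddCommGroup V] [InnerProductSpace ℝ V]

open Submodule

lemma reflection_singleton_apply_of_norm_eq_one {v : V} (hv : ‖v‖ = 1) (x : V) :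
    reflection (ℝ ∙ v) x = (2 * ⟪v, x⟫) • v - x := by
  rw [reflection_singleton_apply, hv]
  module

lemma reflAxis_eq_add_reflection {n : ℕ} (p v x : EuclideanSpace ℝ (Fin n)) :
    reflAxis p v x = p + reflection (ℝ ∙ v) (x - p) := by
  simp only [reflAxis, reflection_singleton_apply, RCLike.ofReal_real_eq_id, id,
    ← real_inner_self_eq_norm_sq, real_inner_comm v]
  module

lemma reflAxis_image_frontier {n : ℕ} (p v : EuclideanSpace ℝ (Fin n))
    (s : Set (EuclideanSpace ℝ (Fin n))) :
    reflAxis p v '' frontier s = frontier (reflAxis p v '' s) := by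
  let h := (Homeomorph.subRight p).trans
    ((reflection (ℝ ∙ v)).toHomeomorph.trans (Homeomorph.addLeft p))
  have hh : ⇑h = reflAxis p v := funext fun x => (reflAxis_eq_add_reflection p v x).symm
  rw [← hh, h.image_frontier]

lemma reflAxis_image_image_add_left {n : ℕ} (p v : EuclideanSpace ℝ (Fin n))
    (K : Set (EuclideanSpace ℝ (Fin n))) :
    reflAxis p v '' ((p + ·) '' K) = (p + ·) '' (reflection (ℝ ∙ v) '' K) := by
  simp only [image_image, reflAxis_eq_add_reflection, add_sub_cancel_left]

lemma OrthonormalBasis.reflection_reflection_eq_reflection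
    (b : OrthonormalBasis (Fin 3) ℝ V) (x : V) :
    reflection (ℝ ∙ b 0) (reflection (ℝ ∙ b 1) x) = reflection (ℝ ∙ b 2) x := by
  have hx := b.sum_repr' x
  rw [Fin.sum_univ_three] at hx
  have h10 : ⟪b 0, b 1⟫ = 0 := b.orthonormal.2 (by decide)
  simp only [reflection_singleton_apply_of_norm_eq_one (b.orthonormal.1 _), inner_sub_right,
    real_inner_smul_right, h10]
  linear_combination (norm := module) (-2 : ℝ) • hx

lemma LinearMap.IsSymmetric.apply_reflection_of_eigenvector {M : V →ₗ[ℝ] V}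
    (hM : M.IsSymmetric) {v : V} {μ : ℝ} (hv : M v = μ • v) (x : V) :
    M (reflection (ℝ ∙ v) x) = reflection (ℝ ∙ v) (M x) := by
  simp only [reflection_singleton_apply, map_sub, map_nsmul, map_smul, hv, ← hM v x,
    real_inner_smul_left]
  module

end Reflection

section QuadraticCone

variable {V : Type*} [NormedAddCommGroup V] [InnerProductSpace ℝ V] {Z : Set V} {n : V}

open Submodule

lemma forall_inner_pos_or_forall_inner_neg (hZ : ∀ e ∈ Z, ⟪e, n⟫ = 0 → e = 0)
    (hC : IsPreconnected {e ∈ Z | 0 < ⟪e, n⟫}) (T : V ≃ₗᵢ[ℝ] V) (hT : MapsTo T Z Z) :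
    (∀ e ∈ {e ∈ Z | 0 < ⟪e, n⟫}, 0 < ⟪T e, n⟫) ∨
      (∀ e ∈ {e ∈ Z | 0 < ⟪e, n⟫}, ⟪T e, n⟫ < 0) := by
  have hcont : Continuous fun e : V => ⟪e, n⟫ := by fun_prop
  have hsplit : T '' {e ∈ Z | 0 < ⟪e, n⟫} ⊆ {e | 0 < ⟪e, n⟫} ∪ {e | ⟪e, n⟫ < 0} := by
    rintro - ⟨e, ⟨heZ, hen⟩, rfl⟩
    have hTe : T e ≠ 0 := fun h => hen.ne' <| by
      rw [T.injective (h.trans (map_zero T).symm), inner_zero_left]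
    exact (show ⟪T e, n⟫ ≠ 0 from fun h => hTe (hZ _ (hT heZ) h)).lt_or_gt.symm
  rcases (hC.image T T.continuous.continuousOn).subset_or_subset
    (isOpen_lt continuous_const hcont) (isOpen_lt hcont continuous_const)
    (disjoint_left.2 fun e (h₁ : 0 < ⟪e, n⟫) (h₂ : ⟪e, n⟫ < 0) => lt_asymm h₁ h₂) hsplit
    with h | h
  · exact .inl fun e he => h (mem_image_of_mem T he)
  · exact .inr fun e he => h (mem_image_of_mem T he)

lemma exists_forall_inner_pos_of_apply_apply_eq (hZ : ∀ e ∈ Z, ⟪e, n⟫ = 0 → e = 0)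
    (hC : IsPreconnected {e ∈ Z | 0 < ⟪e, n⟫}) (hZneg : ∀ e ∈ Z, -e ∈ Z)
    (T : Fin 3 → V ≃ₗᵢ[ℝ] V) (hT : ∀ i, MapsTo (T i) Z Z) (hcomp : ∀ x, T 0 (T 1 x) = T 2 x) :
    ∃ i, ∀ e ∈ {e ∈ Z | 0 < ⟪e, n⟫}, 0 < ⟪T i e, n⟫ := by
  by_contra! h
  have hneg : ∀ i, ∀ e ∈ {e ∈ Z | 0 < ⟪e, n⟫}, ⟪T i e, n⟫ < 0 := fun i =>
    (forall_inner_pos_or_forall_inner_neg hZ hC (T i) (hT i)).resolve_left fun hpos =>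
      let ⟨e, he, hle⟩ := h i
      (hpos e he).not_ge hle
  obtain ⟨e, he, -⟩ := h 0
  have hmem : -T 1 e ∈ {e ∈ Z | 0 < ⟪e, n⟫} :=
    ⟨hZneg _ (hT 1 he.1), by rw [inner_neg_left]; linarith [hneg 1 e he]⟩
  have h0 := hneg 0 _ hmem
  rw [map_neg, hcomp, inner_neg_left] at h0
  linarith [hneg 2 e he]

lemma image_eq_of_forall_inner_pos (hZ : ∀ e ∈ Z, ⟪e, n⟫ = 0 → e = 0) (T : V ≃ₗᵢ[ℝ] V)
    (hTinv : Function.Involutive T) (hT : MapsTo T Z Z)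
    (hpos : ∀ e ∈ {e ∈ Z | 0 < ⟪e, n⟫}, 0 < ⟪T e, n⟫) :
    T '' {e ∈ Z | 0 ≤ ⟪e, n⟫} = {e ∈ Z | 0 ≤ ⟪e, n⟫} := by
  have hmaps : MapsTo T {e ∈ Z | 0 ≤ ⟪e, n⟫} {e ∈ Z | 0 ≤ ⟪e, n⟫} := by
    rintro e ⟨heZ, hen⟩
    rcases hen.eq_or_lt with hen | hen
    · rw [hZ e heZ hen.symm, map_zero]
      exact ⟨hZ e heZ hen.symm ▸ heZ, (inner_zero_left n).ge⟩
    · exact ⟨hT heZ, (hpos e ⟨heZ, hen⟩).le⟩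
  exact hmaps.image_subset.antisymm fun e he => ⟨T e, hmaps he, hTinv e⟩

theorem exists_reflection_image_eq_of_isSymmetric [FiniteDimensional ℝ V]
    (hV : Module.finrank ℝ V = 3) {M : V →ₗ[ℝ] V} (hM : M.IsSymmetric)
    (hpointed : ∀ e, ⟪M e, e⟫ ≤ 0 → ⟪e, n⟫ = 0 → e = 0)
    (hconv : Convex ℝ {e | ⟪M e, e⟫ ≤ 0 ∧ 0 < ⟪e, n⟫}) :
    ∃ v ≠ 0, Submodule.reflection (ℝ ∙ v) '' {e | ⟪M e, e⟫ ≤ 0 ∧ 0 ≤ ⟪e, n⟫} =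
      {e | ⟪M e, e⟫ ≤ 0 ∧ 0 ≤ ⟪e, n⟫} := by
  set b := hM.eigenvectorBasis hV
  have hTZ : ∀ i, MapsTo (reflection (ℝ ∙ b i)) {e | ⟪M e, e⟫ ≤ 0} {e | ⟪M e, e⟫ ≤ 0} := by
    intro i e (he : ⟪M e, e⟫ ≤ 0)
    have hb : M (b i) = hM.eigenvalues hV i • b i := by
      exact_mod_cast hM.apply_eigenvectorBasis hV i
    rwa [mem_ofPred_eq, hM.apply_reflection_of_eigenvector hb, LinearIsometryEquiv.inner_map_map]
  obtain ⟨i, hi⟩ := exists_forall_inner_pos_of_apply_apply_eq (Z := {e | ⟪M e, e⟫ ≤ 0})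
    (fun e he => hpointed e he) hconv.isPreconnected
    (fun e (he : ⟪M e, e⟫ ≤ 0) => by simpa only [mem_ofPred_eq, map_neg, inner_neg_neg])
    (fun i => reflection (ℝ ∙ b i)) hTZ b.reflection_reflection_eq_reflection
  exact ⟨b i, b.orthonormal.ne_zero i, image_eq_of_forall_inner_pos (fun e he => hpointed e he)
    _ (reflection_involutive _) (hTZ i) hi⟩

end QuadraticCone

section Homogeneous

variable {m : ℕ} {Q G : EuclideanSpace ℝ (Fin m) → ℝ} {n N : EuclideanSpace ℝ (Fin m)}
  {W : Set (EuclideanSpace ℝ (Fin m))}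

lemma exists_pos_smul_eq_iff_of_homogeneous
    (hQ : ∀ (l : ℝ) d, ⟪d, n⟫ = 1 → Q (l • d) = l ^ 2 * G d) (e : EuclideanSpace ℝ (Fin m)) :
    (∃ l : ℝ, 0 < l ∧ ∃ d ∈ {d | ⟪d, n⟫ = 1 ∧ G d ≤ 0}, l • d = e) ↔ Q e ≤ 0 ∧ 0 < ⟪e, n⟫ := by
  constructor
  · rintro ⟨l, hl, d, ⟨hdn, hGd⟩, rfl⟩
    rw [hQ l d hdn, real_inner_smul_left, hdn, mul_one]
    exact ⟨mul_nonpos_of_nonneg_of_nonpos (sq_nonneg l) hGd, hl⟩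
  · rintro ⟨hQe, hen⟩
    have hdn : ⟪⟪e, n⟫⁻¹ • e, n⟫ = 1 := by rw [real_inner_smul_left, inv_mul_cancel₀ hen.ne']
    have hde : ⟪e, n⟫ • ⟪e, n⟫⁻¹ • e = e := smul_inv_smul₀ hen.ne' e
    refine ⟨⟪e, n⟫, hen, _, ⟨hdn, ?_⟩, hde⟩
    rw [← hde, hQ _ _ hdn] at hQe
    exact nonpos_of_mul_nonpos_right hQe (pow_pos hen 2)

variable (hQ : ∀ (l : ℝ) d, ⟪d, n⟫ = 1 → Q (l • d) = l ^ 2 * G d)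
  (hW : ∀ d, N + d ∈ W ↔ ⟪d, n⟫ = 1 ∧ G d ≤ 0)
include hQ hW

lemma convex_of_homogeneous (hWc : Convex ℝ W) : Convex ℝ {e | Q e ≤ 0 ∧ 0 < ⟪e, n⟫} := by
  have hD : {d | ⟪d, n⟫ = 1 ∧ G d ≤ 0} = (N + ·) ⁻¹' W := by
    ext d
    exact (hW d).symm
  have hC : {e | Q e ≤ 0 ∧ 0 < ⟪e, n⟫} = ConvexCone.hull ℝ {d | ⟪d, n⟫ = 1 ∧ G d ≤ 0} := by
    rw [ConvexCone.coe_hull_of_convex (hD ▸ hWc.translate_preimage_right N)]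
    ext e
    simp_rw [mem_ofPred_eq, mem_smul_set, exists_pos_smul_eq_iff_of_homogeneous hQ e]
  exact hC ▸ (ConvexCone.hull ℝ _).convex

lemma coneHull_eq_image_of_homogeneous (hpointed : ∀ e, Q e ≤ 0 → ⟪e, n⟫ = 0 → e = 0)
    (hne : W.Nonempty) : coneHull N W = (N + ·) '' {e | Q e ≤ 0 ∧ 0 ≤ ⟪e, n⟫} := by
  ext z
  constructor
  · rintro ⟨y, hy, l, hl, rfl⟩
    obtain ⟨hyn, hyG⟩ := (hW (y - N)).1 (by rwa [add_sub_cancel])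
    refine ⟨l • (y - N), ?_, rfl⟩
    rw [mem_ofPred_eq, hQ l _ hyn, real_inner_smul_left, hyn, mul_one]
    exact ⟨mul_nonpos_of_nonneg_of_nonpos (sq_nonneg l) hyG, hl⟩
  · rintro ⟨e, ⟨hQe, hen⟩, rfl⟩
    rcases hen.eq_or_lt with hen | hen
    · obtain ⟨y, hy⟩ := hne
      exact ⟨y, hy, 0, le_rfl, by rw [hpointed e hQe hen.symm, zero_smul]⟩
    · obtain ⟨l, hl, d, hd, rfl⟩ := (exists_pos_smul_eq_iff_of_homogeneous hQ e).2 ⟨hQe, hen⟩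
      exact ⟨N + d, (hW d).2 hd, l, hl.le, by rw [add_sub_cancel_left]⟩

end Homogeneous

section AxialQuadric

variable {V : Type*} [NormedAddCommGroup V] [InnerProductSpace ℝ V] (w : V) (a b : ℝ)

def axialGauge (y : V) : ℝ := ⟪y, w⟫ ^ 2 / a ^ 2 + ‖y - ⟪y, w⟫ • w‖ ^ 2 / b ^ 2

lemma convexOn_axialGauge : ConvexOn ℝ univ (axialGauge w a b) := by
  let P : V →ₗ[ℝ] V := LinearMap.id - (innerₛₗ ℝ w).smulRight w
  have h₁ : ConvexOn ℝ univ fun y : V => ⟪w, y⟫ ^ 2 := by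
    exact (Even.convexOn_pow even_two).comp_linearMap (innerₛₗ ℝ w)
  have h₂ : ConvexOn ℝ univ fun y : V => ‖P y‖ ^ 2 := by
    exact (convexOn_univ_norm.pow (fun _ _ => norm_nonneg _) 2).comp_linearMap P
  have hsum : axialGauge w a b =
      (fun y => (a ^ 2)⁻¹ • ⟪w, y⟫ ^ 2) + fun y => (b ^ 2)⁻¹ • ‖P y‖ ^ 2 := by
    ext y
    simp [axialGauge, P, real_inner_comm w, div_eq_inv_mul]
  rw [hsum]
  exact (h₁.smul (by positivity)).add (h₂.smul (by positivity))

lemma axialGauge_smul (l : ℝ) (y : V) : axialGauge w a b (l • y) = l ^ 2 * axialGauge w a b y := by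
  simp only [axialGauge, real_inner_smul_left, mul_smul, ← smul_sub, norm_smul, Real.norm_eq_abs,
    mul_pow, sq_abs]
  ring

variable {w a b}

lemma axialGauge_add_smul (hw : ‖w‖ = 1) (ha : a ≠ 0) (d : V) :
    axialGauge w a b (a • w + d) = 1 + (2 * ⟪d, w⟫ / a + axialGauge w a b d) := by
  have hww : ⟪w, w⟫ = 1 := by rw [real_inner_self_eq_norm_sq, hw, one_pow]
  have hperp : a • w + d - ⟪a • w + d, w⟫ • w = d - ⟪d, w⟫ • w := by
    rw [inner_add_left, real_inner_smul_left, hww, mul_one, add_smul]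
    abel
  rw [axialGauge, axialGauge, hperp, inner_add_left, real_inner_smul_left, hww]
  field_simp
  ring

lemma eq_zero_of_axialGauge_nonpos (ha : a ≠ 0) (hb : b ≠ 0) {y : V}
    (hy : axialGauge w a b y ≤ 0) : y = 0 := by
  have h₁ : 0 ≤ ⟪y, w⟫ ^ 2 / a ^ 2 := by positivity
  have h₂ : 0 ≤ ‖y - ⟪y, w⟫ • w‖ ^ 2 / b ^ 2 := by positivity
  rw [axialGauge] at hy
  have hyw : ⟪y, w⟫ = 0 := by
    simpa [ha] using (show ⟪y, w⟫ ^ 2 / a ^ 2 = 0 by linarith)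
  have hperp : y - ⟪y, w⟫ • w = 0 := by
    simpa [hb] using (show ‖y - ⟪y, w⟫ • w‖ ^ 2 / b ^ 2 = 0 by linarith)
  rwa [hyw, zero_smul, sub_zero] at hperp

variable (w a b)

def axialConeOp (n : V) : V →ₗ[ℝ] V where
  toFun e := a⁻¹ • (⟪e, w⟫ • n + ⟪e, n⟫ • w) + (a ^ 2)⁻¹ • ⟪e, w⟫ • w +
    (b ^ 2)⁻¹ • (e - ⟪e, w⟫ • w)
  map_add' x y := by
    simp only [inner_add_left]
    module
  map_smul' t x := by
    simp only [real_inner_smul_left, RingHom.id_apply]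
    module

lemma axialConeOp_isSymmetric (n : V) : (axialConeOp w a b n).IsSymmetric := by
  intro x y
  simp only [axialConeOp, LinearMap.coe_mk, AddHom.coe_mk, inner_add_left, inner_add_right,
    inner_sub_left, inner_sub_right, real_inner_smul_left, real_inner_smul_right,
    real_inner_comm y n, real_inner_comm y w]
  ring

variable {w a b}

lemma inner_axialConeOp_self (hw : ‖w‖ = 1) (n e : V) :
    ⟪axialConeOp w a b n e, e⟫ = ⟪e, n⟫ * (2 * ⟪e, w⟫ / a) + axialGauge w a b e := by
  have hww : ⟪w, w⟫ = 1 := by rw [real_inner_self_eq_norm_sq, hw, one_pow]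
  rw [axialGauge, ← real_inner_self_eq_norm_sq]
  simp only [axialConeOp, LinearMap.coe_mk, AddHom.coe_mk, inner_add_left, inner_sub_left,
    inner_sub_right, real_inner_smul_left, real_inner_smul_right, real_inner_comm e n,
    real_inner_comm e w, hww]
  ring

end AxialQuadric

lemma convex_planeNormal {m : ℕ} (p u : EuclideanSpace ℝ (Fin m)) :
    Convex ℝ (planeNormal p u) := by
  intro x (hx : ⟪x - p, u⟫ = 0) y (hy : ⟪y - p, u⟫ = 0) s t _ _ hst
  have hsplit : s • x + t • y - p = s • (x - p) + t • (y - p) := by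
    linear_combination (norm := module) hst • p
  show ⟪s • x + t • y - p, u⟫ = 0
  rw [hsplit, inner_add_left, real_inner_smul_left, real_inner_smul_left, hx, hy]
  ring

lemma add_mem_planeNormal_iff {m : ℕ} {N p u : EuclideanSpace ℝ (Fin m)}
    (hN : N ∉ planeNormal p u) (d : EuclideanSpace ℝ (Fin m)) :
    N + d ∈ planeNormal p u ↔ ⟪d, ⟪p - N, u⟫⁻¹ • u⟫ = 1 := by
  have hsplit : ∀ x, ⟪x - p, u⟫ = ⟪x - N, u⟫ - ⟪p - N, u⟫ := fun x => by
    rw [← inner_sub_left, sub_sub_sub_cancel_right]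
  have hα : ⟪p - N, u⟫ ≠ 0 := fun h => hN <| by
    rw [planeNormal, mem_ofPred_eq, hsplit, sub_self, inner_zero_left, h, sub_zero]
  rw [planeNormal, mem_ofPred_eq, hsplit, add_sub_cancel_left, real_inner_smul_right,
    inv_mul_eq_one₀ hα, sub_eq_zero, eq_comm]

lemma convex_solidEllipsoidRev (c w : E3) (a b : ℝ) : Convex ℝ (solidEllipsoidRev c w a b) := by
  show Convex ℝ {x | axialGauge w a b (x - c) ≤ 1}
  simpa [neg_add_eq_sub] using ((convexOn_axialGauge w a b).translate_right (-c)).convex_le 1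

lemma add_mem_solidEllipsoidRev_iff {c w : E3} {a b : ℝ} (hw : ‖w‖ = 1) (ha : a ≠ 0) (d : E3) :
    c + a • w + d ∈ solidEllipsoidRev c w a b ↔ 2 * ⟪d, w⟫ / a + axialGauge w a b d ≤ 0 := by
  show axialGauge w a b (c + a • w + d - c) ≤ 1 ↔ _
  rw [add_assoc, add_sub_cancel_left, axialGauge_add_smul hw ha]
  constructor <;> intro h <;> linarith

theorem stmt4_general (c w : E3) (a b : ℝ) (hw : ‖w‖ = 1) (ha : 0 < a) (hb : 0 < b)
    (N : E3) (hN : N = c + a • w) :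
    ∀ p u : E3, u ≠ 0 →
      (planeNormal p u ∩ interior (solidEllipsoidRev c w a b)).Nonempty →
      N ∉ planeNormal p u →
      ∃ v : E3, v ≠ 0 ∧
        reflAxis N v '' coneBd N (planeNormal p u ∩ solidEllipsoidRev c w a b) =
          coneBd N (planeNormal p u ∩ solidEllipsoidRev c w a b) := by
  intro p u _ hne hNp
  set n := ⟪p - N, u⟫⁻¹ • u
  set M := axialConeOp w a b n
  have hW (d : E3) : N + d ∈ planeNormal p u ∩ solidEllipsoidRev c w a b ↔
      ⟪d, n⟫ = 1 ∧ 2 * ⟪d, w⟫ / a + axialGauge w a b d ≤ 0 :=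
    and_congr (add_mem_planeNormal_iff hNp d) (hN ▸ add_mem_solidEllipsoidRev_iff hw ha.ne' d)
  have hQ (l : ℝ) (d : E3) (hd : ⟪d, n⟫ = 1) :
      ⟪M (l • d), l • d⟫ = l ^ 2 * (2 * ⟪d, w⟫ / a + axialGauge w a b d) := by
    rw [inner_axialConeOp_self hw, axialGauge_smul, real_inner_smul_left, real_inner_smul_left, hd]
    ring
  have hpointed (e : E3) (hQe : ⟪M e, e⟫ ≤ 0) (hen : ⟪e, n⟫ = 0) : e = 0 := by
    rw [inner_axialConeOp_self hw, hen, zero_mul, zero_add] at hQe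
    exact eq_zero_of_axialGauge_nonpos ha.ne' hb.ne' hQe
  obtain ⟨v, hv, hsymm⟩ := exists_reflection_image_eq_of_isSymmetric finrank_euclideanSpace_fin
    (axialConeOp_isSymmetric w a b n) hpointed
    (convex_of_homogeneous hQ hW
      ((convex_planeNormal p u).inter (convex_solidEllipsoidRev c w a b)))
  refine ⟨v, hv, ?_⟩
  rw [coneBd, coneHull_eq_image_of_homogeneous hQ hW hpointed
    (hne.mono (inter_subset_inter_right _ interior_subset)), reflAxis_image_frontier,
    reflAxis_image_image_add_left, hsymm]

/-- All inscribed cones of a solid ellipsoid of revolution with apex at the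
axis endpoint N are axially symmetric (invariant under a rotation by π about some line
through N). -/
theorem stmt4 (c w : E3) (a b : ℝ) (hw : ‖w‖ = 1) (ha : 0 < a) (hb : 0 < b)
    (N S : E3) (hN : N = c + a • w) (hS : S = c - a • w) :
    ∀ p u : E3, u ≠ 0 →
      (planeNormal p u ∩ interior (solidEllipsoidRev c w a b)).Nonempty →
      N ∉ planeNormal p u →
      ∃ v : E3, v ≠ 0 ∧
        reflAxis N v '' coneBd N (planeNormal p u ∩ solidEllipsoidRev c w a b) =
          coneBd N (planeNormal p u ∩ solidEllipsoidRev c w a b) :=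
  stmt4_general c w a b hw ha hb N hN
end
end

section
/- Under the hypotheses of the stereographic characterization theorem (for every plane Γ meeting int K, not containing N and not parallel to Π_S, there is a rotation R^Γ by π about a line L_Γ with R^Γ(C_N(K_Γ)) = C_N(K_Γ) and Ψ(K_Γ) = R^Γ(K'_Γ) for a homothetic copy K'_Γ of K_Γ centered at N): if u is a unit vector parallel to Π_S and Γ is a plane parallel to u (not parallel to Π_S) meeting int K with N ∉ Γ, then the axis L_Γ is contained in the plane through N perpendicular to u. -/
open Set Metric EuclideanGeometry Filter RealInnerProductSpace Real

noncomputable section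

section AuxLemmas

lemma my_refl_affine {n : ℕ} (q v a b : EuclideanSpace ℝ (Fin n)) (t : ℝ) :
    reflAxis q v (a + t • (b - a)) = reflAxis q v a + t • (reflAxis q v b - reflAxis q v a) := by
  unfold reflAxis
  have h1 : ⟪a + t • (b - a) - q, v⟫ = ⟪a - q, v⟫ + t * (⟪b - q, v⟫ - ⟪a - q, v⟫) := by
    rw [show a + t • (b - a) - q = (a - q) + t • ((b - q) - (a - q)) by abel]
    simp only [inner_add_left, real_inner_smul_left, inner_sub_left]
  rw [h1]
  match_scalars <;> ring

lemma my_refl_invol {n : ℕ} (q v x : EuclideanSpace ℝ (Fin n)) (hv : v ≠ 0) :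
    reflAxis q v (reflAxis q v x) = x := by
  have hvv : ⟪v, v⟫ ≠ 0 := inner_self_ne_zero.mpr hv
  unfold reflAxis
  have h2 : ⟪q + ((2 * ⟪x - q, v⟫ / ⟪v, v⟫) • v - (x - q)) - q, v⟫ = ⟪x - q, v⟫ := by
    rw [show q + ((2 * ⟪x - q, v⟫ / ⟪v, v⟫) • v - (x - q)) - q
        = (2 * ⟪x - q, v⟫ / ⟪v, v⟫) • v - (x - q) by abel]
    rw [inner_sub_left, real_inner_smul_left, div_mul_cancel₀ _ hvv]
    ring
  rw [h2]
  match_scalars <;> ring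

end AuxLemmas

set_option maxHeartbeats 2000000 in
/-- Lemma 1: under the hypotheses of the stereographic characterization
theorem, for a plane Γ parallel to a unit vector uu parallel to Π_S (Γ not parallel to Π_S,
meeting int K, N ∉ Γ), any axis L_Γ of a rotation satisfying the two conditions is contained
in the plane through N perpendicular to uu. -/
theorem stmt9 (K : Set E3) (N S u : E3) (Ψ : E3 → E3) (h : StereoHyp K N S u Ψ)
    (uu : E3) (huu : ‖uu‖ = 1) (hpar : ⟪uu, u⟫ = 0)
    (p w : E3) (hw : w ≠ 0) (hGu : ⟪uu, w⟫ = 0)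
    (hGint : (planeNormal p w ∩ interior K).Nonempty)
    (hGN : N ∉ planeNormal p w) (hGS : ¬ (∃ s : ℝ, w = s • u))
    (q v : E3) (hv : v ≠ 0)
    (hrot : reflAxis q v '' coneBd N (planeNormal p w ∩ K) = coneBd N (planeNormal p w ∩ K))
    (hproj : ∃ lam : ℝ, 0 < lam ∧
      Ψ '' (planeNormal p w ∩ K) =
        reflAxis q v '' ((fun x => N + lam • (x - N)) '' (planeNormal p w ∩ K))) :
    lineDir q v ⊆ planeNormal N uu := by
  obtain ⟨⟨hconv, hKcomp, hKintne⟩, hNfr, hSfr, hNS, hu, hsupp, huniq, hΨ, _hrotAll⟩ := h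
  have hvv : ⟪v, v⟫ ≠ 0 := inner_self_ne_zero.mpr hv
  set Γ : Set E3 := planeNormal p w with hΓdef
  set KΓ : Set E3 := Γ ∩ K with hKΓdef
  set C : Set E3 := coneHull N KΓ with hCdef
  have hBfr : coneBd N KΓ = frontier C := rfl
  rw [hBfr] at hrot
  set B : Set E3 := frontier C with hBdef
  set c : ℝ := ⟪p - N, w⟫ with hcdef
  have hc0 : c ≠ 0 := by
    intro h0
    apply hGN
    show ⟪N - p, w⟫ = 0
    have h1 : ⟪N - p, w⟫ = -c := by
      rw [hcdef, ← inner_neg_left]; congr 1; abel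
    rw [h1, h0, neg_zero]
  have hyc : ∀ y ∈ Γ, ⟪y - N, w⟫ = c := by
    intro y hy
    have hy' : ⟪y - p, w⟫ = 0 := hy
    rw [show y - N = (y - p) + (p - N) by abel, inner_add_left, hy', zero_add]
  -- the linear functional z ↦ c * ⟪z - N, w⟫ is nonnegative on the cone C
  have hsC : ∀ z ∈ C, 0 ≤ c * ⟪z - N, w⟫ := by
    rintro z ⟨y, hy, l, hl, rfl⟩
    rw [add_sub_cancel_left, real_inner_smul_left, hyc y hy.1,
      show c * (l * c) = l * c ^ 2 by ring]
    positivity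
  -- N belongs to the cone
  obtain ⟨x0, hx0Γ, hx0int⟩ := hGint
  have hx0K : x0 ∈ KΓ := ⟨hx0Γ, interior_subset hx0int⟩
  have hNC : N ∈ C := ⟨x0, hx0K, 0, le_refl 0, by rw [zero_smul, add_zero]⟩
  have hww : (0:ℝ) < ⟪w, w⟫ := lt_of_le_of_ne real_inner_self_nonneg (Ne.symm (inner_self_ne_zero.mpr hw))
  -- N is on the frontier of the cone
  have hNB : N ∈ B := by
    have hni : N ∉ interior C := by
      intro hNint
      rw [mem_interior_iff_mem_nhds, Metric.mem_nhds_iff] at hNint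
      obtain ⟨ε, hε, hball⟩ := hNint
      set r : ℝ := ε / (2 * (|c| * ‖w‖ + 1)) with hrdef
      have hr0 : 0 < r := by positivity
      have hmem : N - (r * c) • w ∈ C := by
        apply hball
        rw [mem_ball, dist_eq_norm,
          show N - (r * c) • w - N = -((r * c) • w) by abel, norm_neg, norm_smul,
          Real.norm_eq_abs, abs_mul, abs_of_pos hr0]
        calc r * |c| * ‖w‖ ≤ r * (|c| * ‖w‖ + 1) := by
              nlinarith [abs_nonneg c, norm_nonneg w]
          _ < ε := by
              rw [hrdef, div_mul_eq_mul_div, div_lt_iff₀ (by positivity)]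
              nlinarith [mul_pos hε (show (0:ℝ) < |c| * ‖w‖ + 1 by positivity)]
      have hge := hsC _ hmem
      rw [show N - (r * c) • w - N = -((r * c) • w) by abel, inner_neg_left,
        real_inner_smul_left] at hge
      nlinarith [mul_pos (mul_pos hr0 (mul_self_pos.mpr hc0)) hww]
    exact ⟨subset_closure hNC, hni⟩
  -- dilation invariance of the frontier
  have hdil : ∀ t : ℝ, 0 < t → ∀ z ∈ B, N + t • (z - N) ∈ B := by
    intro t ht z hz
    let φ : E3 ≃ₜ E3 := (Homeomorph.subRight N).trans
      ((Homeomorph.smulOfNeZero t ht.ne').trans (Homeomorph.addLeft N))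
    have hφapp : ∀ x : E3, φ x = N + t • (x - N) := fun x => rfl
    have hφC : φ '' C = C := by
      ext z'
      constructor
      · rintro ⟨z'', ⟨y, hy, l, hl, rfl⟩, rfl⟩
        refine ⟨y, hy, t * l, mul_nonneg ht.le hl, ?_⟩
        rw [hφapp, add_sub_cancel_left, smul_smul]
      · rintro ⟨y, hy, l, hl, rfl⟩
        refine ⟨N + (l / t) • (y - N), ⟨y, hy, l / t, div_nonneg hl ht.le, rfl⟩, ?_⟩
        rw [hφapp, add_sub_cancel_left, smul_smul, mul_div_cancel₀ _ ht.ne']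
    have hfr := φ.image_frontier C
    rw [hφC] at hfr
    rw [hBdef, ← hfr]
    exact ⟨z, hz, (hφapp z).symm⟩
  -- nonnegativity extends to the closure
  have hclosC : ∀ z ∈ closure C, 0 ≤ c * ⟪z - N, w⟫ := by
    have hcl : IsClosed {z : E3 | 0 ≤ c * ⟪z - N, w⟫} := by
      apply isClosed_le continuous_const
      exact continuous_const.mul
        (Continuous.inner (continuous_id.sub continuous_const) continuous_const)
    exact fun z hz => closure_minimal hsC hcl hz
  -- boundedness of K
  obtain ⟨rK, hrK⟩ := hKcomp.isBounded.subset_closedBall N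
  set Mb : ℝ := max rK 0 with hMbdef
  have hMb0 : 0 ≤ Mb := le_max_right _ _
  have hMb : ∀ y ∈ K, ‖y - N‖ ≤ Mb := by
    intro y hy
    have hyb := hrK hy
    rw [mem_closedBall, dist_eq_norm] at hyb
    exact le_trans hyb (le_max_left _ _)
  -- points of the closure of the cone on the base hyperplane equal N
  have hclosEq : ∀ z ∈ closure C, c * ⟪z - N, w⟫ = 0 → z = N := by
    intro z hz hzs
    have key : ∀ ε : ℝ, 0 < ε → ‖z - N‖ ≤ ε := by
      intro ε hε
      set A : ℝ := |c| * ‖w‖ * Mb / c ^ 2 with hA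
      have hA0 : 0 ≤ A :=
        div_nonneg (mul_nonneg (mul_nonneg (abs_nonneg c) (norm_nonneg w)) hMb0) (sq_nonneg c)
      set δ : ℝ := ε / (1 + A) with hδ
      have hδ0 : 0 < δ := div_pos hε (by linarith)
      obtain ⟨z', hz'C, hdist⟩ := Metric.mem_closure_iff.mp hz δ hδ0
      obtain ⟨y, hy, l, hl, rfl⟩ := hz'C
      have h1 : c * ⟪N + l • (y - N) - N, w⟫ = l * c ^ 2 := by
        rw [add_sub_cancel_left, real_inner_smul_left, hyc y hy.1]; ring
      have h2 : |l| * c ^ 2 ≤ |c| * ‖w‖ * δ := by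
        have he : l * c ^ 2 = c * ⟪(N + l • (y - N)) - z, w⟫ := by
          have hz0 : c * ⟪z - N, w⟫ = 0 := hzs
          rw [show (N + l • (y - N)) - z = ((N + l • (y - N)) - N) - (z - N) by abel,
            inner_sub_left, mul_sub, h1, hz0, sub_zero]
        have hcs : |⟪(N + l • (y - N)) - z, w⟫| ≤ ‖(N + l • (y - N)) - z‖ * ‖w‖ :=
          abs_real_inner_le_norm _ _
        have hd : ‖(N + l • (y - N)) - z‖ ≤ δ := by
          rw [← dist_eq_norm, dist_comm]
          exact hdist.le
        calc |l| * c ^ 2 = |l * c ^ 2| := by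
              rw [abs_mul, abs_of_nonneg (sq_nonneg c)]
          _ = |c * ⟪(N + l • (y - N)) - z, w⟫| := by rw [he]
          _ = |c| * |⟪(N + l • (y - N)) - z, w⟫| := abs_mul _ _
          _ ≤ |c| * (‖(N + l • (y - N)) - z‖ * ‖w‖) :=
              mul_le_mul_of_nonneg_left hcs (abs_nonneg c)
          _ ≤ |c| * (δ * ‖w‖) := by
              apply mul_le_mul_of_nonneg_left _ (abs_nonneg c)
              exact mul_le_mul_of_nonneg_right hd (norm_nonneg w)
          _ = |c| * ‖w‖ * δ := by ring
      have hc2 : (0:ℝ) < c ^ 2 := by positivity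
      have hll : l ≤ |c| * ‖w‖ * δ / c ^ 2 := by
        rw [le_div_iff₀ hc2]
        calc l * c ^ 2 ≤ |l| * c ^ 2 :=
              mul_le_mul_of_nonneg_right (le_abs_self l) hc2.le
          _ ≤ |c| * ‖w‖ * δ := h2
      have hzN : ‖(N + l • (y - N)) - N‖ ≤ A * δ := by
        rw [add_sub_cancel_left, norm_smul, Real.norm_eq_abs]
        have hyb : ‖y - N‖ ≤ Mb := hMb y hy.2
        calc |l| * ‖y - N‖ = l * ‖y - N‖ := by rw [abs_of_nonneg hl]
          _ ≤ (|c| * ‖w‖ * δ / c ^ 2) * Mb := by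
              apply mul_le_mul hll hyb (norm_nonneg _)
              exact div_nonneg
                (mul_nonneg (mul_nonneg (abs_nonneg c) (norm_nonneg w)) hδ0.le) (sq_nonneg c)
          _ = A * δ := by rw [hA]; ring
      have htri := dist_triangle z (N + l • (y - N)) N
      rw [dist_eq_norm, dist_eq_norm, dist_eq_norm] at htri
      have h3 : ‖z - (N + l • (y - N))‖ ≤ δ := by
        rw [← dist_eq_norm]
        exact hdist.le
      have h4 : ‖z - N‖ ≤ δ + A * δ := by linarith
      have h5 : δ + A * δ = ε := by
        have h1A : (1:ℝ) + A ≠ 0 := ne_of_gt (by linarith)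
        rw [hδ]
        field_simp
      linarith
    have hn : ‖z - N‖ ≤ 0 := by
      by_contra hpos
      push_neg at hpos
      have := key (‖z - N‖ / 2) (by linarith)
      linarith
    exact sub_eq_zero.mp (norm_le_zero_iff.mp hn)
  -- the rotation maps B into B
  have hRB : ∀ z ∈ B, reflAxis q v z ∈ B := by
    intro z hz
    rw [← hrot]
    exact ⟨z, hz, rfl⟩
  have hfrcl : B ⊆ closure C := frontier_subset_closure
  -- the apex is fixed by the rotation
  have hRN : reflAxis q v N = N := by
    have hMB : reflAxis q v N ∈ B := hRB N hNB
    have hMray : ∀ t : ℝ, 0 < t → reflAxis q v N + t • (N - reflAxis q v N) ∈ B := by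
      intro t ht
      have h2 : N + t • (reflAxis q v N - N) ∈ B := hdil t ht _ hMB
      have h3 := hRB _ h2
      rw [my_refl_affine q v N (reflAxis q v N) t, my_refl_invol q v N hv] at h3
      exact h3
    have hs1 : 0 ≤ c * ⟪reflAxis q v N - N, w⟫ := hclosC _ (hfrcl hMB)
    have h4 := hclosC _ (hfrcl (hMray 2 (by norm_num)))
    rw [show reflAxis q v N + (2:ℝ) • (N - reflAxis q v N) - N
        = -(reflAxis q v N - N) by module, inner_neg_left, mul_neg] at h4
    have hs0 : c * ⟪reflAxis q v N - N, w⟫ = 0 := le_antisymm (by linarith) hs1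
    exact hclosEq _ (hfrcl hMB) hs0
  -- hence q - N is parallel to v
  have hqN : ∃ τ : ℝ, q - N = τ • v := by
    have h5 : q + ((2 * ⟪N - q, v⟫ / ⟪v, v⟫) • v - (N - q)) = N := hRN
    have h10 : (2 * ⟪N - q, v⟫ / ⟪v, v⟫) • v - (N - q) = N - q := by
      rwa [← eq_sub_iff_add_eq'] at h5
    have h11 : (2 * ⟪N - q, v⟫ / ⟪v, v⟫) • v = (N - q) + (N - q) := eq_add_of_sub_eq h10
    refine ⟨-(⟪N - q, v⟫ / ⟪v, v⟫), ?_⟩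
    have h13 : (⟪N - q, v⟫ / ⟪v, v⟫) • v = N - q := by
      apply smul_right_injective E3 (show (2:ℝ) ≠ 0 by norm_num)
      show (2:ℝ) • ((⟪N - q, v⟫ / ⟪v, v⟫) • v) = (2:ℝ) • (N - q)
      rw [smul_smul, show (2:ℝ) * (⟪N - q, v⟫ / ⟪v, v⟫) = 2 * ⟪N - q, v⟫ / ⟪v, v⟫ by ring,
        h11, two_smul ℝ (N - q)]
    rw [neg_smul, h13]
    abel
  -- the projected image lies in the support plane
  obtain ⟨lam, hlam, himg⟩ := hproj
  have hplane : ∀ y ∈ KΓ, ⟪reflAxis q v (N + lam • (y - N)) - S, u⟫ = 0 := by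
    intro y hy
    have h1 : reflAxis q v (N + lam • (y - N)) ∈ Ψ '' KΓ := by
      rw [himg]
      exact ⟨N + lam • (y - N), ⟨y, hy, rfl⟩, rfl⟩
    obtain ⟨x, hx, hxe⟩ := h1
    have hxN : x ≠ N := by
      intro hxeq
      exact hGN (hxeq ▸ hx.1)
    have h3 : ⟪Ψ x - S, u⟫ = 0 := (hΨ x hx.2 hxN).2
    rw [hxe] at h3
    exact h3
  have hdiffm : ∀ y₁ ∈ KΓ, ∀ y₂ ∈ KΓ,
      2 * ⟪y₁ - y₂, v⟫ / ⟪v, v⟫ * ⟪v, u⟫ - ⟪y₁ - y₂, u⟫ = 0 := by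
    intro y₁ hy₁ y₂ hy₂
    have e3 : ⟪reflAxis q v (N + lam • (y₁ - N)) - reflAxis q v (N + lam • (y₂ - N)), u⟫ = 0 := by
      rw [show reflAxis q v (N + lam • (y₁ - N)) - reflAxis q v (N + lam • (y₂ - N))
          = (reflAxis q v (N + lam • (y₁ - N)) - S)
            - (reflAxis q v (N + lam • (y₂ - N)) - S) by abel,
        inner_sub_left, hplane y₁ hy₁, hplane y₂ hy₂, sub_zero]
    have e4 : reflAxis q v (N + lam • (y₁ - N)) - reflAxis q v (N + lam • (y₂ - N))
        = lam • ((2 * ⟪y₁ - y₂, v⟫ / ⟪v, v⟫) • v - (y₁ - y₂)) := by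
      unfold reflAxis
      simp only [inner_add_left, inner_sub_left, real_inner_smul_left]
      match_scalars <;> ring
    have e5 : ⟪(2 * ⟪y₁ - y₂, v⟫ / ⟪v, v⟫) • v - (y₁ - y₂), u⟫
        = 2 * ⟪y₁ - y₂, v⟫ / ⟪v, v⟫ * ⟪v, u⟫ - ⟪y₁ - y₂, u⟫ := by
      simp only [inner_sub_left, real_inner_smul_left]
    rw [e4, real_inner_smul_left, e5] at e3
    rcases mul_eq_zero.mp e3 with hbad | hgood
    · exact absurd hbad hlam.ne'
    · exact hgood
  -- all directions parallel to Γ are orthogonal to m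
  have hdm : ∀ d : E3, ⟪d, w⟫ = 0 → 2 * ⟪d, v⟫ / ⟪v, v⟫ * ⟪v, u⟫ - ⟪d, u⟫ = 0 := by
    intro d hd
    rcases eq_or_ne d 0 with rfl | hd0
    · simp
    have hdn : 0 < ‖d‖ := norm_pos_iff.mpr hd0
    obtain ⟨ε, hε, hball⟩ := Metric.isOpen_iff.mp isOpen_interior x0 hx0int
    set κ : ℝ := ε / (2 * ‖d‖) with hκ
    have hκ0 : 0 < κ := by positivity
    have h1 : x0 + κ • d ∈ KΓ := by
      refine ⟨?_, ?_⟩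
      · show ⟪x0 + κ • d - p, w⟫ = 0
        rw [show x0 + κ • d - p = (x0 - p) + κ • d by abel, inner_add_left,
          real_inner_smul_left, hd, mul_zero, add_zero]
        exact hx0Γ
      · apply interior_subset
        apply hball
        rw [mem_ball, dist_eq_norm, show x0 + κ • d - x0 = κ • d by abel, norm_smul,
          Real.norm_eq_abs, abs_of_pos hκ0, hκ, div_mul_eq_mul_div, div_lt_iff₀ (by positivity)]
        nlinarith
    have h2 := hdiffm _ h1 _ hx0K
    rw [show x0 + κ • d - x0 = κ • d by abel, real_inner_smul_left, real_inner_smul_left] at h2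
    have h3 : κ * (2 * ⟪d, v⟫ / ⟪v, v⟫ * ⟪v, u⟫ - ⟪d, u⟫) = 0 := by
      rw [← h2]; ring
    rcases mul_eq_zero.mp h3 with hbad | hgood
    · exact absurd hbad hκ0.ne'
    · exact hgood
  -- hence m is parallel to w
  have hmw : ∃ α : ℝ, (2 * ⟪v, u⟫ / ⟪v, v⟫) • v - u = α • w := by
    set m : E3 := (2 * ⟪v, u⟫ / ⟪v, v⟫) • v - u with hm
    have hle : (Submodule.span ℝ {w})ᗮ ≤ (Submodule.span ℝ {m})ᗮ := by
      intro d hd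
      rw [Submodule.mem_orthogonal'] at hd ⊢
      intro x hxmem
      rw [Submodule.mem_span_singleton] at hxmem
      obtain ⟨a, rfl⟩ := hxmem
      rw [real_inner_smul_right]
      have hdw : ⟪d, w⟫ = 0 := hd w (Submodule.mem_span_singleton_self w)
      have hdm' := hdm d hdw
      have hdm0 : ⟪d, m⟫ = 0 := by
        rw [hm, inner_sub_right, real_inner_smul_right]
        linear_combination hdm'
      rw [hdm0, mul_zero]
    have h2 := Submodule.orthogonal_le hle
    rw [Submodule.orthogonal_orthogonal, Submodule.orthogonal_orthogonal] at h2
    have h3 := h2 (Submodule.mem_span_singleton_self m)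
    rw [Submodule.mem_span_singleton] at h3
    obtain ⟨α, hα⟩ := h3
    exact ⟨α, hα.symm⟩
  -- the axis direction is orthogonal to uu
  have hvuu : ⟪v, uu⟫ = 0 := by
    obtain ⟨α, hα⟩ := hmw
    have h1 : ⟪(2 * ⟪v, u⟫ / ⟪v, v⟫) • v - u, uu⟫ = 0 := by
      rw [hα, real_inner_smul_left, real_inner_comm uu w, hGu, mul_zero]
    rw [inner_sub_left, real_inner_smul_left, real_inner_comm uu u, hpar, sub_zero] at h1
    rcases eq_or_ne ⟪v, u⟫ 0 with hvu | hvu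
    · exfalso
      apply hGS
      rw [hvu, mul_zero, zero_div, zero_smul, zero_sub] at hα
      have hα0 : α ≠ 0 := by
        rintro rfl
        rw [zero_smul] at hα
        exact hu (neg_eq_zero.mp hα)
      refine ⟨-α⁻¹, ?_⟩
      calc w = α⁻¹ • (α • w) := by rw [smul_smul, inv_mul_cancel₀ hα0, one_smul]
        _ = α⁻¹ • (-u) := by rw [← hα]
        _ = -α⁻¹ • u := by rw [smul_neg, neg_smul]
    · have h2 : 2 * ⟪v, u⟫ / ⟪v, v⟫ ≠ 0 := div_ne_zero (mul_ne_zero two_ne_zero hvu) hvv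
      rcases mul_eq_zero.mp h1 with hbad | hgood
      · exact absurd hbad h2
      · exact hgood
  -- conclusion
  intro x hx
  obtain ⟨t, rfl⟩ := hx
  obtain ⟨τ, hτ⟩ := hqN
  show ⟪q + t • v - N, uu⟫ = 0
  rw [show q + t • v - N = (q - N) + t • v by abel, hτ, inner_add_left,
    real_inner_smul_left, real_inner_smul_left, hvuu, mul_zero, mul_zero, add_zero]
end
end

section
/- Let K ⊂ ℝ² be a convex body such that for every point x ∈ bd K there is a line through x that is an axis of symmetry of K (reflection across the line maps K to itself). Then K is a closed disc. -/
open Set Metric EuclideanGeometry Filter RealInnerProductSpace Real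

noncomputable section

/-!
Let `c` be the circumcenter of `K`, the center of its smallest enclosing disc `closedBall c r`.
It is unique (Apollonius), so every isometry preserving `K` fixes it, and every axis of
symmetry passes through `c`. The center lies in `int K`: otherwise a linear functional `f`
separates it from `int K`, the circumcenter has farthest points `y` in every closed half-plane
through `c`, so one with `f y = f c`; the axis through `y` is then the supporting line `{f = f c}`,
and reflecting an interior point in it leaves `K`. Now every line through `c` meets `bd K` at
some `x ≠ c`, and the axis through `x` is that line. Reflections in lines through `c` move a
farthest point to every point of the circle of radius `r`, so by convexity `K` is the disc.
-/

open Topology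

section ReflAxis

variable {n : ℕ} {p v : EuclideanSpace ℝ (Fin n)}

theorem reflAxis_eq_reflection (p v : EuclideanSpace ℝ (Fin n)) :
    reflAxis p v = reflection (AffineSubspace.mk' p (ℝ ∙ v)) := by
  funext x
  rw [reflection_apply_of_mem _ x (AffineSubspace.self_mem_mk' p _)]
  simp only [AffineSubspace.direction_mk', Submodule.reflection_apply,
    Submodule.starProjection_singleton, reflAxis, vsub_eq_sub, vadd_eq_add]
  rw [real_inner_self_eq_norm_sq, real_inner_comm]
  module

theorem isometry_reflAxis (p v : EuclideanSpace ℝ (Fin n)) : Isometry (reflAxis p v) := by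
  rw [reflAxis_eq_reflection]
  exact (reflection _).isometry

theorem reflAxis_eq_self_iff {q : EuclideanSpace ℝ (Fin n)} :
    reflAxis p v q = q ↔ q ∈ lineDir p v := by
  rw [reflAxis_eq_reflection, reflection_eq_self_iff, AffineSubspace.mem_mk',
    Submodule.mem_span_singleton, lineDir, mem_ofPred_eq, vsub_eq_sub]
  exact exists_congr fun t => by rw [eq_sub_iff_add_eq', eq_comm]

theorem reflAxis_eq_of_mem_lineDir {q : EuclideanSpace ℝ (Fin n)} (hq : q ∈ lineDir p v)
    (hqp : q ≠ p) : reflAxis p v = reflAxis q (q - p) := by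
  obtain ⟨t, rfl⟩ := hq
  have ht : t ≠ 0 := by rintro rfl; simp at hqp
  rw [reflAxis_eq_reflection, reflAxis_eq_reflection, add_sub_cancel_left,
    Submodule.span_singleton_smul_eq (IsUnit.mk0 t ht)]
  have hs : AffineSubspace.mk' (p + t • v) (ℝ ∙ v) = AffineSubspace.mk' p (ℝ ∙ v) := by
    have h := AffineSubspace.mk'_eq
      (AffineSubspace.vadd_mem_mk' p (Submodule.smul_mem _ t (Submodule.mem_span_singleton_self v)))
    rwa [AffineSubspace.direction_mk', vadd_eq_add, add_comm] at h
  funext x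
  exact eq_reflection_of_eq_subspace hs.symm x

theorem reflAxis_smul {t : ℝ} (ht : t ≠ 0) : reflAxis p (t • v) = reflAxis p v := by
  rw [reflAxis_eq_reflection, reflAxis_eq_reflection,
    Submodule.span_singleton_smul_eq (IsUnit.mk0 t ht)]

theorem map_reflAxis_of_map_eq_zero (f : EuclideanSpace ℝ (Fin n) →L[ℝ] ℝ) (hv : f v = 0)
    (x : EuclideanSpace ℝ (Fin n)) : f (reflAxis p v x) = 2 * f p - f x := by
  simp only [reflAxis, map_add, map_sub, map_smul, hv, smul_eq_mul]
  ring

theorem reflAxis_add_add_of_norm_eq {a b : EuclideanSpace ℝ (Fin n)} (hab : ‖a‖ = ‖b‖)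
    (c : EuclideanSpace ℝ (Fin n)) : reflAxis c (a + b) (c + a) = c + b := by
  have h : 2 * ⟪a, a + b⟫ = ⟪a + b, a + b⟫ := by
    rw [inner_add_right, real_inner_add_add_self, real_inner_self_eq_norm_sq,
      real_inner_self_eq_norm_sq, hab]
    ring
  rcases eq_or_ne (a + b) 0 with hab0 | hab0
  · rw [reflAxis, hab0, eq_neg_of_add_eq_zero_right hab0]
    simp
  · rw [reflAxis, add_sub_cancel_left, h, div_self (inner_self_ne_zero.mpr hab0), one_smul]
    abel

theorem reflAxis_add_of_inner_eq_zero {a w : EuclideanSpace ℝ (Fin n)} (h : ⟪a, w⟫ = 0)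
    (c : EuclideanSpace ℝ (Fin n)) : reflAxis c w (c + a) = c - a := by
  rw [reflAxis, add_sub_cancel_left, h]
  simp [sub_eq_add_neg]

end ReflAxis

theorem exists_ne_zero_inner_eq_zero_s12 (a : E2) : ∃ w : E2, w ≠ 0 ∧ ⟪a, w⟫ = 0 := by
  rcases eq_or_ne a 0 with rfl | ha
  · obtain ⟨w, hw⟩ := exists_ne (0 : E2)
    exact ⟨w, hw, inner_zero_left w⟩
  have : Fact (Module.finrank ℝ E2 = 1 + 1) := ⟨by simp⟩
  have hbot : (ℝ ∙ a)ᗮ ≠ ⊥ := by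
    intro hbot
    have := Submodule.finrank_orthogonal_span_singleton (𝕜 := ℝ) (n := 1) ha
    rw [hbot, finrank_bot] at this
    exact zero_ne_one this
  obtain ⟨w, hw, hw0⟩ := Submodule.exists_mem_ne_zero_of_ne_bot hbot
  exact ⟨w, hw0, Submodule.mem_orthogonal_singleton_iff_inner_right.mp hw⟩

theorem exists_reflAxis_eq_of_norm_eq {a b : E2} (hab : ‖a‖ = ‖b‖) (c : E2) :
    ∃ w : E2, w ≠ 0 ∧ reflAxis c w (c + a) = c + b := by
  rcases eq_or_ne (a + b) 0 with hab0 | hab0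
  · obtain ⟨w, hw, haw⟩ := exists_ne_zero_inner_eq_zero_s12 a
    refine ⟨w, hw, ?_⟩
    rw [reflAxis_add_of_inner_eq_zero haw, eq_neg_of_add_eq_zero_right hab0, sub_eq_add_neg]
  · exact ⟨a + b, hab0, reflAxis_add_add_of_norm_eq hab c⟩

theorem exists_ne_zero_add_smul_mem_frontier {E : Type*} [NormedAddCommGroup E] [NormedSpace ℝ E]
    {K : Set E} {c w : E} (hK : Bornology.IsBounded K) (hc : c ∈ interior K) (hw : w ≠ 0) :
    ∃ t : ℝ, t ≠ 0 ∧ c + t • w ∈ frontier K := by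
  set g : ℝ → E := fun t => c + t • w
  have hg : Continuous g := by fun_prop
  have hne : (g ⁻¹' K).Nonempty := ⟨0, by simpa [g] using interior_subset hc⟩
  have hnu : g ⁻¹' K ≠ univ := by
    obtain ⟨R, hR, hKR⟩ := hK.subset_closedBall_lt 0 c
    refine (ne_univ_iff_exists_notMem _).mpr ⟨2 * R / ‖w‖, fun hK' => ?_⟩
    have := hKR hK'
    rw [mem_closedBall, dist_eq_norm, add_sub_cancel_left, norm_smul, Real.norm_eq_abs,
      abs_of_pos (by positivity), div_mul_cancel₀ _ (norm_ne_zero_iff.mpr hw)] at this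
    linarith
  obtain ⟨t, ht⟩ := nonempty_frontier_iff.mpr ⟨hne, hnu⟩
  have hgt : g t ∈ frontier K := hg.frontier_preimage_subset K ht
  refine ⟨t, fun ht0 => ?_, hgt⟩
  simp only [g, ht0, zero_smul, add_zero] at hgt
  exact hgt.2 hc

theorem mem_frontier_of_subset_closedBall {E : Type*} [NormedAddCommGroup E] [NormedSpace ℝ E]
    {K : Set E} {c y : E} {r : ℝ} (hK : K ⊆ closedBall c r) (hr : r ≠ 0) (hy : y ∈ K)
    (hyr : dist y c = r) : y ∈ frontier K := by
  refine ⟨subset_closure hy, fun hi => ?_⟩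
  have := interior_mono hK hi
  rw [interior_closedBall c hr, mem_ball] at this
  exact this.ne hyr

namespace IsCircumDisc

variable {K : Set E2} {c : E2} {r : ℝ}

theorem exists_of_isCompact (hK : IsCompact K) (hne : K.Nonempty) : ∃ c r, IsCircumDisc K c r := by
  obtain ⟨y₀, hy₀⟩ := hne
  obtain ⟨R, hR⟩ := hK.isBounded.subset_closedBall y₀
  have hR0 : 0 ≤ R := dist_nonneg.trans (hR hy₀)
  set A : Set (E2 × ℝ) := {q | K ⊆ closedBall q.1 q.2}
  have hA : IsClosed A := by
    simp only [A, subset_def, mem_closedBall, ofPred_forall]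
    exact isClosed_biInter fun y _ =>
      isClosed_le (continuous_const.dist continuous_fst) continuous_snd
  have hB : IsCompact (A ∩ closedBall y₀ R ×ˢ Icc 0 R) :=
    ((isCompact_closedBall y₀ R).prod isCompact_Icc).inter_left hA
  have hy₀B : (y₀, R) ∈ A ∩ closedBall y₀ R ×ˢ Icc 0 R :=
    ⟨hR, mem_closedBall_self hR0, hR0, le_rfl⟩
  obtain ⟨q, ⟨hq, hqB⟩, hmin⟩ := hB.exists_isMinOn ⟨_, hy₀B⟩ continuous_snd.continuousOn
  refine ⟨q.1, q.2, hq, fun c' r' h' => ?_⟩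
  rcases le_or_gt R r' with hRr' | hr'R
  · exact hqB.2.2.trans hRr'
  · have hy₀c' : dist y₀ c' ≤ r' := h' hy₀
    have hc'B : (c', r') ∈ A ∩ closedBall y₀ R ×ˢ Icc 0 R :=
      ⟨h', by rw [mem_closedBall, dist_comm]; linarith, dist_nonneg.trans hy₀c', hr'R.le⟩
    exact hmin hc'B

theorem eq_center (h : IsCircumDisc K c r) (hne : K.Nonempty) {c' : E2}
    (h' : K ⊆ closedBall c' r) : c' = c := by
  obtain ⟨y, hy⟩ := hne
  have hr : 0 ≤ r := dist_nonneg.trans (h.1 hy)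
  set ρ := r ^ 2 - (dist c c' / 2) ^ 2 with hρ_def
  -- Apollonius: the midpoint of `c` and `c'` is the center of a smaller enclosing disc.
  have hm : ∀ z ∈ K, dist z (midpoint ℝ c c') ^ 2 ≤ ρ := fun z hz => by
    have hz₁ : dist z c ≤ r := h.1 hz
    have hz₂ : dist z c' ≤ r := h' hz
    have := dist_sq_add_dist_sq_eq_two_mul_dist_midpoint_sq_add_half_dist_sq z c c'
    nlinarith [pow_le_pow_left₀ dist_nonneg hz₁ 2, pow_le_pow_left₀ dist_nonneg hz₂ 2]
  have hρ : 0 ≤ ρ := (sq_nonneg _).trans (hm y hy)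
  have hsub : K ⊆ closedBall (midpoint ℝ c c') √ρ := fun z hz =>
    Real.le_sqrt_of_sq_le (hm z hz)
  have hrρ : r ^ 2 ≤ ρ := by
    simpa [Real.sq_sqrt hρ] using pow_le_pow_left₀ hr (h.2 _ _ hsub) 2
  have : dist c c' = 0 := by nlinarith
  exact (dist_eq_zero.mp this).symm

theorem apply_center_eq (h : IsCircumDisc K c r) (hne : K.Nonempty) {φ : E2 → E2}
    (hφ : Isometry φ) (hφK : φ '' K = K) : φ c = c := by
  refine h.eq_center hne ?_
  rw [← hφK]
  rintro _ ⟨y, hy, rfl⟩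
  rw [mem_closedBall, hφ.dist_eq]
  exact h.1 hy

theorem radius_pos (h : IsCircumDisc K c r) (hint : (interior K).Nonempty) : 0 < r := by
  by_contra! hr
  have hKc : K ⊆ {c} := fun y hy => dist_le_zero.mp ((h.1 hy).trans hr)
  simpa [interior_singleton] using hint.mono (interior_mono hKc)

theorem exists_dist_eq_and_inner_nonneg (h : IsCircumDisc K c r) (hK : IsCompact K)
    (hne : K.Nonempty) (u : E2) : ∃ y ∈ K, dist y c = r ∧ 0 ≤ ⟪y - c, u⟫ := by
  set φ : E2 → ℝ := fun y => max (r ^ 2 - ‖y - c‖ ^ 2) (-⟪y - c, u⟫)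
  obtain ⟨y, hy, hmin⟩ := hK.exists_isMinOn hne (by fun_prop : Continuous φ).continuousOn
  -- `φ y ≤ 0` is the claim; a farthest point from `c - s • u` has `φ ≤ s * C`.
  set C := 2 * r * ‖u‖ + ‖u‖ ^ 2
  have hbound : ∀ s ∈ Ioo (0 : ℝ) 1, φ y ≤ s * C := by
    rintro s ⟨hs0, hs1⟩
    obtain ⟨z, hz, hzmax⟩ := hK.exists_isMaxOn hne
      (continuous_id.dist (continuous_const (y := c - s • u))).continuousOn
    have hr : r ≤ dist z (c - s • u) := h.2 _ _ fun x hx => hzmax hx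
    have hzc : ‖z - c‖ ≤ r := by rw [← dist_eq_norm]; exact h.1 hz
    have hexp : dist z (c - s • u) ^ 2 = ‖z - c‖ ^ 2 + 2 * s * ⟪z - c, u⟫ + s ^ 2 * ‖u‖ ^ 2 := by
      rw [dist_eq_norm, show z - (c - s • u) = z - c + s • u by abel, norm_add_sq_real,
        inner_smul_right, norm_smul, Real.norm_eq_abs, mul_pow, sq_abs]
      ring
    have hcs : |⟪z - c, u⟫| ≤ r * ‖u‖ :=
      (abs_real_inner_le_norm _ _).trans (mul_le_mul_of_nonneg_right hzc (norm_nonneg u))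
    have hr0 : 0 ≤ r := (norm_nonneg _).trans hzc
    have hsq : r ^ 2 ≤ dist z (c - s • u) ^ 2 := pow_le_pow_left₀ hr0 hr 2
    refine (hmin hz).trans (max_le ?_ ?_)
    · nlinarith [abs_le.mp hcs, norm_nonneg u, mul_nonneg hs0.le (sq_nonneg ‖u‖)]
    · have h1 : -(2 * s * ⟪z - c, u⟫) ≤ s ^ 2 * ‖u‖ ^ 2 := by
        nlinarith [pow_le_pow_left₀ (norm_nonneg _) hzc 2]
      have h2 : -⟪z - c, u⟫ ≤ s * ‖u‖ ^ 2 := by nlinarith [sq_nonneg ‖u‖]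
      nlinarith [mul_nonneg (mul_nonneg hs0.le hr0) (norm_nonneg u)]
  have hφ : φ y ≤ 0 := by
    have hlim : Tendsto (fun s : ℝ => s * C) (𝓝[>] 0) (𝓝 0) := by
      have := ((continuous_mul_const C).tendsto 0).mono_left (nhdsWithin_le_nhds (s := Ioi 0))
      rwa [zero_mul] at this
    exact ge_of_tendsto hlim (Filter.mem_of_superset (Ioo_mem_nhdsGT one_pos) hbound)
  obtain ⟨hy₁, hy₂⟩ := max_le_iff.mp hφ
  have hyc : ‖y - c‖ ≤ r := by rw [← dist_eq_norm]; exact h.1 hy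
  refine ⟨y, hy, ?_, by linarith⟩
  rw [dist_eq_norm]
  nlinarith [norm_nonneg (y - c)]

theorem reflAxis_eq_of_image_eq (h : IsCircumDisc K c r) (hne : K.Nonempty) {p v : E2}
    (hKv : reflAxis p v '' K = K) (hcp : c ≠ p) : reflAxis p v = reflAxis c (c - p) :=
  reflAxis_eq_of_mem_lineDir
    (reflAxis_eq_self_iff.mp (h.apply_center_eq hne (isometry_reflAxis p v) hKv)) hcp

theorem center_mem_interior (h : IsCircumDisc K c r) (hK : IsConvexBody K)
    (hsym : ∀ x ∈ frontier K, ∃ v : E2, reflAxis x v '' K = K) : c ∈ interior K := by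
  obtain ⟨hconv, hcpt, hint⟩ := hK
  have hne : K.Nonempty := hint.mono interior_subset
  by_contra hc
  obtain ⟨f, hf⟩ := geometric_hahn_banach_open_point hconv.interior isOpen_interior hc
  have hfK : ∀ y ∈ K, f y ≤ f c := by
    have hcl : closure (interior K) ⊆ {y | f y ≤ f c} :=
      closure_minimal (fun y hy => (hf y hy).le) (isClosed_le f.continuous continuous_const)
    rwa [hconv.closure_interior_eq_closure_of_nonempty_interior hint,
      hcpt.isClosed.closure_eq] at hcl
  obtain ⟨y, hyK, hyr, hyu⟩ :=
    h.exists_dist_eq_and_inner_nonneg hcpt hne ((InnerProductSpace.toDual ℝ E2).symm f)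
  rw [real_inner_comm, InnerProductSpace.toDual_symm_apply, map_sub, sub_nonneg] at hyu
  have hr := h.radius_pos hint
  have hyc : c ≠ y := fun hcy => hr.ne' (by rw [← hyr, hcy, dist_self])
  obtain ⟨v, hv⟩ := hsym y (mem_frontier_of_subset_closedBall h.1 hr.ne' hyK hyr)
  rw [h.reflAxis_eq_of_image_eq hne hv hyc] at hv
  -- the axis is the supporting line, so reflecting an interior point leaves the half-plane
  obtain ⟨a, ha⟩ := hint
  have hfa := hfK _ (hv ▸ mem_image_of_mem _ (interior_subset ha))
  rw [map_reflAxis_of_map_eq_zero f (by rw [map_sub]; linarith [hfK y hyK])] at hfa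
  linarith [hf a ha]

theorem reflAxis_center_image_eq (h : IsCircumDisc K c r) (hK : IsConvexBody K)
    (hsym : ∀ x ∈ frontier K, ∃ v : E2, reflAxis x v '' K = K) {w : E2} (hw : w ≠ 0) :
    reflAxis c w '' K = K := by
  have hc := h.center_mem_interior hK hsym
  obtain ⟨t, ht, hx⟩ := exists_ne_zero_add_smul_mem_frontier hK.2.1.isBounded hc hw
  obtain ⟨v, hv⟩ := hsym _ hx
  have hcx : c ≠ c + t • w := fun hcx => ht (by simpa [hw] using hcx)
  rwa [h.reflAxis_eq_of_image_eq ⟨c, interior_subset hc⟩ hv hcx, sub_add_cancel_left, ← neg_smul,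
    reflAxis_smul (neg_ne_zero.mpr ht)] at hv

theorem eq_closedBall (h : IsCircumDisc K c r) (hK : IsConvexBody K)
    (hrefl : ∀ w : E2, w ≠ 0 → reflAxis c w '' K = K) : K = closedBall c r := by
  obtain ⟨hconv, hcpt, hint⟩ := hK
  obtain ⟨x, hx, hxr, -⟩ :=
    h.exists_dist_eq_and_inner_nonneg hcpt (hint.mono interior_subset) 0
  refine h.1.antisymm ?_
  rw [← convexHull_sphere_eq_closedBall c (h.radius_pos hint).le]
  refine convexHull_min (fun p hp => ?_) hconv
  have hnorm : ‖x - c‖ = ‖p - c‖ := by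
    rw [← dist_eq_norm, ← dist_eq_norm, hxr, Metric.mem_sphere.mp hp]
  obtain ⟨w, hw, hwp⟩ := exists_reflAxis_eq_of_norm_eq hnorm c
  rw [add_sub_cancel, add_sub_cancel] at hwp
  rw [← hrefl w hw, ← hwp]
  exact mem_image_of_mem _ hx

end IsCircumDisc

/-- A planar convex body such that through every boundary point there passes an
axis of symmetry is a closed disc. -/
theorem stmt12 (K : Set E2) (hK : IsConvexBody K)
    (hsym : ∀ x ∈ frontier K, ∃ v : E2, v ≠ 0 ∧ reflAxis x v '' K = K) :
    ∃ (c : E2) (r : ℝ), 0 < r ∧ K = closedBall c r := by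
  obtain ⟨c, r, hc⟩ := IsCircumDisc.exists_of_isCompact hK.2.1 (hK.2.2.mono interior_subset)
  have hsym' : ∀ x ∈ frontier K, ∃ v : E2, reflAxis x v '' K = K :=
    fun x hx => (hsym x hx).imp fun _ => And.right
  exact ⟨c, r, hc.radius_pos hK.2.2,
    hc.eq_closedBall hK fun w hw => hc.reflAxis_center_image_eq hK hsym' hw⟩
end
end
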